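/- arXiv:2304.01787 — 7 statements merged into one kernel-verified Lean document; each statement's English description precedes it below -/
import Mathlib

section
/- Let G be a finite abelian group and let k, r be integers with k ≥ 3, 2k ≤ r, r ≥ 2^k·k², and r^k ≤ |G| ≤ 2·r^k. Then for every ε ∈ (0,1] and every event E ⊆ G^r: if D1(E) ≥ ε, then D0(E) ≥ ε^{3/2}/(21·k^k). In particular, any deterministic solver that outputs a k-SUM solution with probability at least ε on an instance drawn from the planted distribution D1 also outputs a k-SUM solution with probability at least ε^{3/2}/(21·k^k) on an instance drawn from the uniform distribution D0. -/
open Finset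

/-- Number of k-SUM solutions of an instance `X ∈ G^r`: the number of `k`-element
subsets `S ⊆ {1,…,r}` with `∑_{i∈S} X i = 0`. -/
def numSol {G : Type} [AddCommGroup G] [DecidableEq G] (k : ℕ) {r : ℕ} (X : Fin r → G) : ℕ :=
  (((univ : Finset (Fin r)).powersetCard k).filter (fun S => ∑ i ∈ S, X i = 0)).card

/-- Plant a solution at `S`: replace the entry at the smallest index `i` of `S` by
`-∑_{j∈S, j≠i} Y j`. -/
def plant {G : Type} [AddCommGroup G] {r : ℕ} (Y : Fin r → G) (S : Finset (Fin r)) :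
    Fin r → G :=
  fun j =>
    if hS : S.Nonempty then
      if j = S.min' hS then -∑ i ∈ S.erase (S.min' hS), Y i else Y j
    else Y j

/-- Probability of an event `E` under the uniform distribution `D0` on `G^r`. -/
noncomputable def D0prob (G : Type) [Fintype G] {r : ℕ} (E : Finset (Fin r → G)) : ℝ :=
  (E.card : ℝ) / (Fintype.card G : ℝ) ^ r

/-- The probability mass function of the planted distribution `D1` on `G^r`:
draw `Y` uniformly from `G^r` and an independent uniformly random `k`-element
subset `S`, and output `plant Y S`. -/
noncomputable def D1pmf {G : Type} [AddCommGroup G] [Fintype G] [DecidableEq G] (k : ℕ)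
    {r : ℕ} (X : Fin r → G) : ℝ :=
  (((univ : Finset ((Fin r → G) × Finset (Fin r))).filter
      (fun p => p.2.card = k ∧ plant p.1 p.2 = X)).card : ℝ)
    / ((Fintype.card G : ℝ) ^ r * (r.choose k : ℝ))

/-- Probability of an event `E` under the planted distribution `D1`. -/
noncomputable def D1prob {G : Type} [AddCommGroup G] [Fintype G] [DecidableEq G] (k : ℕ)
    {r : ℕ} (E : Finset (Fin r → G)) : ℝ :=
  ∑ X ∈ E, D1pmf k X

/-!
Under `D1` an instance `X` has probability `|G| c(X) / (|G|^r C(r,k))`, so `D1(E) ≥ ε` says that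
`c` has a large sum over `E`. Hölder's inequality `(∑_E c)^3 ≤ |E|^2 ∑_X c(X)^3` turns this into
a lower bound on `|E|` once the third moment is controlled. Expanding the cube,
`∑_X c(X)^3 = ∑_{S,T,U} #{X | S, T, U are solutions of X}`. Three distinct sets with
`U ≠ S ∆ T` impose three independent constraints (the incidence matrix has a unimodular `3 × 3`
minor), which leaves at most `|G|^(r-3)` instances; each of the `O(C(r,k)^2)` remaining
non-constant triples imposes two, and each constant triple one. With `C(r,k) ≤ r^k ≤ |G|` this gives
`∑_X c(X)^3 ≤ 6 C(r,k) |G|^(r-1)`, hence `D0(E)^2 ≥ ε^3 C(r,k)^2 / (6 |G|^2)`, and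
`C(r,k) ≥ 7 r^k / (8 k^k) ≥ 7 |G| / (16 k^k)` concludes.
-/

theorem Finset.exists_mem_notMem_of_ne_of_card_eq {α : Type*} {s t : Finset α} (h : s ≠ t)
    (hc : #s = #t) : ∃ a ∈ s, a ∉ t :=
  not_subset.1 fun hst => h (eq_of_subset_of_card_le hst hc.ge)

theorem Matrix.eq_zero_of_sum_zsmul_eq_zero {κ G : Type*} [Fintype κ] [DecidableEq κ]
    [AddCommGroup G] {M : Matrix κ κ ℤ} (hM : IsUnit M.det) {w : κ → G}
    (hw : ∀ a, ∑ b, M a b • w b = 0) : w = 0 := by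
  funext b
  have := congrArg (fun v : κ → G => ∑ a, M⁻¹ b a • v a) (funext hw)
  simp only [Finset.smul_sum, smul_smul, smul_zero, sum_const_zero] at this
  rw [Finset.sum_comm] at this
  simpa [← Finset.sum_smul, ← Matrix.mul_apply, Matrix.nonsing_inv_mul M hM, Matrix.one_apply]
    using this

section

variable {ι G : Type*} [Fintype ι] [DecidableEq ι] [Fintype G]

theorem card_le_pow_of_eqOn_compl {A : Finset (ι → G)} (I : Finset ι)
    (h : ∀ X ∈ A, ∀ Y ∈ A, (∀ j ∉ I, X j = Y j) → X = Y) :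
    #A ≤ Fintype.card G ^ (Fintype.card ι - #I) := by
  have hinj : Set.InjOn (fun (X : ι → G) (j : {j // j ∉ I}) => X j) A :=
    fun X hX Y hY hXY => h X hX Y hY fun j hj => congrFun hXY ⟨j, hj⟩
  calc #A ≤ #(univ : Finset ({j // j ∉ I} → G)) :=
        card_le_card_of_injOn _ (fun _ _ => mem_coe.2 (mem_univ _)) hinj
    _ = Fintype.card G ^ (Fintype.card ι - #I) := by
        simp [Fintype.card_subtype_compl]

theorem card_filter_forall_ne_eq [DecidableEq G] (X : ι → G) (i : ι) :
    #{Y : ι → G | ∀ j ≠ i, Y j = X j} = Fintype.card G := by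
  have : ({Y : ι → G | ∀ j ≠ i, Y j = X j} : Finset _) =
      univ.image (Function.update X i) := by
    ext Y
    simp only [mem_filter, mem_univ, true_and, mem_image, Function.update_eq_iff]
    exact ⟨fun h => ⟨Y i, rfl, fun j hj => (h j hj).symm⟩,
      fun ⟨_, _, h⟩ j hj => (h j hj).symm⟩
  rw [this, card_image_of_injective _ (Function.update_injective X i), card_univ]

end

section

variable {ι : Type*} (G : Type*) [Fintype ι] [DecidableEq ι] [Fintype G] [AddCommGroup G]
  [DecidableEq G]

def zeroSumCount₃ (S T U : Finset ι) : ℕ :=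
  #{X : ι → G | ∑ i ∈ S, X i = 0 ∧ ∑ i ∈ T, X i = 0 ∧ ∑ i ∈ U, X i = 0}

variable {G}

theorem card_zeroSum_le_of_isUnit_det {κ : Type*} [Fintype κ] [DecidableEq κ]
    (𝒮 : κ → Finset ι) (v : κ → ι) (hv : Function.Injective v)
    (hdet : IsUnit (Matrix.of fun a b => if v b ∈ 𝒮 a then (1 : ℤ) else 0).det) :
    #{X : ι → G | ∀ a, ∑ i ∈ 𝒮 a, X i = 0} ≤
      Fintype.card G ^ (Fintype.card ι - Fintype.card κ) := by
  set I := univ.map ⟨v, hv⟩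
  have hI : #I = Fintype.card κ := by simp [I]
  rw [← hI]
  refine card_le_pow_of_eqOn_compl I fun X hX Y hY hXY => ?_
  simp only [mem_filter, mem_univ, true_and] at hX hY
  have hD : (fun b => X (v b) - Y (v b)) = 0 := by
    refine Matrix.eq_zero_of_sum_zsmul_eq_zero hdet fun a => ?_
    calc ∑ b, (if v b ∈ 𝒮 a then (1 : ℤ) else 0) • (X (v b) - Y (v b))
        = ∑ j ∈ I, (if j ∈ 𝒮 a then (1 : ℤ) else 0) • (X j - Y j) := by
          rw [sum_map]; rfl
      _ = ∑ j, (if j ∈ 𝒮 a then (1 : ℤ) else 0) • (X j - Y j) :=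
          sum_subset (subset_univ I) fun j _ hj => by rw [hXY j hj, sub_self, smul_zero]
      _ = 0 := by simp [ite_smul, sum_ite_mem, sum_sub_distrib, hX a, hY a]
  funext j
  by_cases hj : j ∈ I
  · obtain ⟨b, -, rfl⟩ := mem_map.1 hj
    exact sub_eq_zero.1 (congrFun hD b)
  · exact hXY j hj

theorem card_zeroSum_le {S : Finset ι} (hS : S.Nonempty) :
    #{X : ι → G | ∑ i ∈ S, X i = 0} ≤ Fintype.card G ^ (Fintype.card ι - 1) := by
  obtain ⟨i, hi⟩ := hS
  simpa [hi] using card_zeroSum_le_of_isUnit_det (G := G) ![S] ![i]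
    (Function.injective_of_subsingleton _) (by simp [hi])

theorem card_zeroSum₂_le {S T : Finset ι} (hST : S ≠ T) (hc : #S = #T) :
    #{X : ι → G | ∑ i ∈ S, X i = 0 ∧ ∑ i ∈ T, X i = 0} ≤
      Fintype.card G ^ (Fintype.card ι - 2) := by
  obtain ⟨i, hiS, hiT⟩ := exists_mem_notMem_of_ne_of_card_eq hST hc
  obtain ⟨j, hjT, hjS⟩ := exists_mem_notMem_of_ne_of_card_eq hST.symm hc.symm
  have hij : i ≠ j := by rintro rfl; exact hiT hjT
  simpa [Fin.forall_fin_two] using card_zeroSum_le_of_isUnit_det (G := G) ![S, T] ![i, j]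
    (by simp [Function.Injective, Fin.forall_fin_succ, hij, hij.symm])
    (by simp [Matrix.det_fin_two, hiS, hiT, hjS, hjT])

theorem zeroSumCount₃_le_of_unique_mem {S T U : Finset ι} {l : ι} (hlS : l ∈ S)
    (hlT : l ∉ T) (hlU : l ∉ U) (hTU : T ≠ U) (hc : #T = #U) :
    zeroSumCount₃ G S T U ≤ Fintype.card G ^ (Fintype.card ι - 3) := by
  obtain ⟨i, hiT, hiU⟩ := exists_mem_notMem_of_ne_of_card_eq hTU hc
  obtain ⟨j, hjU, hjT⟩ := exists_mem_notMem_of_ne_of_card_eq hTU.symm hc.symm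
  have hli : l ≠ i := by rintro rfl; exact hlT hiT
  have hlj : l ≠ j := by rintro rfl; exact hlU hjU
  have hij : i ≠ j := by rintro rfl; exact hiU hjU
  -- The minor on the columns `l, i, j` is upper triangular with unit diagonal.
  simpa [zeroSumCount₃, Fin.forall_fin_succ] using
    card_zeroSum_le_of_isUnit_det (G := G) ![S, T, U] ![l, i, j]
      (by simp [Function.Injective, Fin.forall_fin_succ, hli, hlj, hij, hli.symm, hlj.symm,
        hij.symm])
      (by simp [Matrix.det_fin_three, hlS, hlT, hlU, hiT, hiU, hjT, hjU])

theorem zeroSumCount₃_le_of_mem_all {S T U : Finset ι} {l i j : ι} (hlS : l ∈ S)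
    (hlT : l ∈ T) (hlU : l ∈ U) (hiS : i ∈ S) (hiT : i ∉ T) (hiU : i ∈ U) (hjS : j ∉ S)
    (hjT : j ∈ T) (hjU : j ∈ U) :
    zeroSumCount₃ G S T U ≤ Fintype.card G ^ (Fintype.card ι - 3) := by
  have hli : l ≠ i := by rintro rfl; exact hiT hlT
  have hlj : l ≠ j := by rintro rfl; exact hjS hlS
  have hij : i ≠ j := by rintro rfl; exact hiT hjT
  -- The minor on the columns `i, j, l` is `!![1, 0, 1; 0, 1, 1; 1, 1, 1]`, of determinant `-1`.
  simpa [zeroSumCount₃, Fin.forall_fin_succ] using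
    card_zeroSum_le_of_isUnit_det (G := G) ![S, T, U] ![i, j, l]
      (by simp [Function.Injective, Fin.forall_fin_succ, hli, hlj, hij, hli.symm, hlj.symm,
        hij.symm])
      (by simp [Matrix.det_fin_three, hlS, hlT, hlU, hiS, hiT, hiU, hjS, hjT, hjU])

theorem zeroSumCount₃_le {S T U : Finset ι} (hST : S ≠ T) (hSU : S ≠ U) (hTU : T ≠ U)
    (hcST : #S = #T) (hcTU : #T = #U) (hU : U ≠ symmDiff S T) :
    zeroSumCount₃ G S T U ≤ Fintype.card G ^ (Fintype.card ι - 3) := by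
  -- `U ≠ S ∆ T`: some index lies in an odd number of the three sets.
  obtain ⟨x, hx⟩ : ∃ x, (x ∈ U ↔ (x ∈ S ↔ x ∈ T)) := by
    by_contra! h
    exact hU (ext fun x => by have := h x; rw [mem_symmDiff]; tauto)
  have hTS : zeroSumCount₃ G T S U = zeroSumCount₃ G S T U := by
    unfold zeroSumCount₃; congr 1; ext; simp only [mem_filter]; tauto
  have hUS : zeroSumCount₃ G U S T = zeroSumCount₃ G S T U := by
    unfold zeroSumCount₃; congr 1; ext; simp only [mem_filter]; tauto
  by_cases hxS : x ∈ S <;> by_cases hxT : x ∈ T <;> by_cases hxU : x ∈ U <;>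
    simp only [hxS, hxT, hxU, iff_true, iff_false, not_true_eq_false] at hx
  · obtain ⟨i, hiS, hiT⟩ := exists_mem_notMem_of_ne_of_card_eq hST hcST
    obtain ⟨j, hjT, hjS⟩ := exists_mem_notMem_of_ne_of_card_eq hST.symm hcST.symm
    by_cases hiU : i ∈ U
    · by_cases hjU : j ∈ U
      · exact zeroSumCount₃_le_of_mem_all hxS hxT hxU hiS hiT hiU hjS hjT hjU
      · exact hTS ▸ zeroSumCount₃_le_of_unique_mem hjT hjS hjU hSU (hcST ▸ hcTU)
    · exact zeroSumCount₃_le_of_unique_mem hiS hiT hiU hTU hcTU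
  · exact zeroSumCount₃_le_of_unique_mem hxS hxT hxU hTU hcTU
  · exact hTS ▸ zeroSumCount₃_le_of_unique_mem hxT hxS hxU hSU (hcST ▸ hcTU)
  · exact hUS ▸ zeroSumCount₃_le_of_unique_mem hxU hxS hxT hST hcST

theorem sum_zeroSumCount₃_self_le {k : ℕ} (hk : 1 ≤ k) {S : Finset ι} (hS : #S = k) :
    ∑ U ∈ powersetCard k univ, zeroSumCount₃ G S S U ≤
      Fintype.card G ^ (Fintype.card ι - 1) +
        (Fintype.card ι).choose k * Fintype.card G ^ (Fintype.card ι - 2) := by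
  have hSne : S.Nonempty := card_pos.1 (hS ▸ hk)
  have hpt : ∀ U ∈ powersetCard k univ, zeroSumCount₃ G S S U ≤
      (if S = U then Fintype.card G ^ (Fintype.card ι - 1) else 0) +
        Fintype.card G ^ (Fintype.card ι - 2) := by
    intro U hU
    split_ifs with hSU
    · subst hSU
      exact (card_le_card (monotone_filter_right _ fun _ _ h => h.1)).trans
        ((card_zeroSum_le hSne).trans (Nat.le_add_right _ _))
    · rw [zero_add]
      exact (card_le_card (monotone_filter_right _ fun _ _ h => h.2)).trans
        (card_zeroSum₂_le hSU ((mem_powersetCard_univ.1 hU).symm ▸ hS))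
  calc _ ≤ _ := sum_le_sum hpt
    _ ≤ _ := by
      rw [sum_add_distrib, sum_ite_eq, sum_const, card_powersetCard, card_univ, smul_eq_mul]
      gcongr
      split_ifs <;> simp

theorem sum_zeroSumCount₃_le {k : ℕ} {S T : Finset ι} (hS : #S = k) (hT : #T = k)
    (hST : S ≠ T) :
    ∑ U ∈ powersetCard k univ, zeroSumCount₃ G S T U ≤
      3 * Fintype.card G ^ (Fintype.card ι - 2) +
        (Fintype.card ι).choose k * Fintype.card G ^ (Fintype.card ι - 3) := by
  have hpt : ∀ U ∈ powersetCard k univ, zeroSumCount₃ G S T U ≤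
      (if U ∈ ({S, T, symmDiff S T} : Finset _) then Fintype.card G ^ (Fintype.card ι - 2)
        else 0) + Fintype.card G ^ (Fintype.card ι - 3) := by
    intro U hU
    have hU' := mem_powersetCard_univ.1 hU
    split_ifs with hmem
    · exact (card_le_card (monotone_filter_right _ fun _ _ h => ⟨h.1, h.2.1⟩)).trans
        ((card_zeroSum₂_le hST (hS.trans hT.symm)).trans (Nat.le_add_right _ _))
    · simp only [mem_insert, mem_singleton, not_or] at hmem
      rw [zero_add]
      exact zeroSumCount₃_le hST (Ne.symm hmem.1) (Ne.symm hmem.2.1) (hS.trans hT.symm)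
        (hT.trans hU'.symm) hmem.2.2
  calc _ ≤ _ := sum_le_sum hpt
    _ ≤ _ := by
      rw [sum_add_distrib, sum_ite_mem, sum_const, sum_const, card_powersetCard, card_univ,
        smul_eq_mul, smul_eq_mul]
      gcongr
      exact (card_le_card inter_subset_right).trans card_le_three

end

theorem Nat.seven_mul_pow_le_choose {r k : ℕ} (hr : 8 * k ^ 2 ≤ r) :
    7 * r ^ k ≤ 8 * k ^ k * r.choose k := by
  have hkr : k ≤ r := by nlinarith
  have hdesc : (r + 1 - k) ^ k ≤ k ^ k * r.choose k := by
    refine (pow_sub_le_descFactorial r k).trans ?_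
    rw [descFactorial_eq_factorial_mul_choose]
    exact Nat.mul_le_mul_right _ (factorial_le_pow k)
  suffices hbern : 7 * r ^ k ≤ 8 * (r + 1 - k) ^ k by
    rw [mul_assoc]; exact hbern.trans (Nat.mul_le_mul_left 8 hdesc)
  rcases r.eq_zero_or_pos with rfl | hr0
  · obtain rfl : k = 0 := by omega
    norm_num
  -- Bernoulli: `((r + 1 - k) / r) ^ k ≥ 1 - k (k - 1) / r ≥ 7 / 8`.
  have hr0' : (0 : ℝ) < r := by exact_mod_cast hr0
  set x : ℝ := (k - 1) / r
  have hx : (r + 1 - k : ℕ) = (r : ℝ) * (1 + -x) := by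
    rw [Nat.cast_sub (by omega), mul_add, mul_neg, mul_div_cancel₀ _ hr0'.ne']
    push_cast; ring
  have hx2 : -2 ≤ -x := by
    have : (k : ℝ) ≤ r := by exact_mod_cast hkr
    have : x ≤ 1 := (div_le_one hr0').2 (by linarith)
    linarith
  have hkx : k * x ≤ 1 / 8 := by
    rw [show (k : ℝ) * x = k * (k - 1) / r by simp [x, mul_div_assoc],
      div_le_div_iff₀ hr0' (by norm_num)]
    have : (8 * k ^ 2 : ℝ) ≤ r := by exact_mod_cast hr
    nlinarith
  have hbern := one_add_mul_le_pow hx2 k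
  have : (7 : ℝ) * r ^ k ≤ 8 * (r + 1 - k : ℕ) ^ k := by
    rw [hx, mul_pow]
    have : (0 : ℝ) < r ^ k := by positivity
    nlinarith
  exact_mod_cast this

section

variable {G : Type} [AddCommGroup G] {r : ℕ}

theorem plant_eq_iff {Y X : Fin r → G} {S : Finset (Fin r)} (hS : S.Nonempty) :
    plant Y S = X ↔ ∑ i ∈ S, X i = 0 ∧ ∀ j ≠ S.min' hS, Y j = X j := by
  have hplant :
      plant Y S = Function.update Y (S.min' hS) (-∑ i ∈ S.erase (S.min' hS), Y i) := by
    funext j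
    simp only [plant, dif_pos hS, Function.update_apply]
  rw [hplant, Function.update_eq_iff, ← add_sum_erase S X (S.min'_mem hS),
    neg_eq_iff_add_eq_zero, add_comm]
  constructor
  · rintro ⟨hsum, hY⟩
    exact ⟨by rwa [sum_congr rfl fun j hj => hY j (ne_of_mem_erase hj)] at hsum, hY⟩
  · rintro ⟨hsum, hY⟩
    exact ⟨by rwa [sum_congr rfl fun j hj => hY j (ne_of_mem_erase hj)], hY⟩

variable [Fintype G] [DecidableEq G]

theorem card_plant_eq_of_nonempty (X : Fin r → G) {S : Finset (Fin r)} (hS : S.Nonempty) :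
    #{Y | plant Y S = X} = if ∑ i ∈ S, X i = 0 then Fintype.card G else 0 := by
  simp only [plant_eq_iff hS]
  split_ifs with hX
  · simpa [hX] using card_filter_forall_ne_eq X (S.min' hS)
  · simp [hX]

theorem card_plant_eq {k : ℕ} (hk : 1 ≤ k) (X : Fin r → G) :
    #{p : (Fin r → G) × Finset (Fin r) | #p.2 = k ∧ plant p.1 p.2 = X} =
      Fintype.card G * numSol k X := by
  calc _ = ∑ S ∈ powersetCard k univ, #{Y | plant Y S = X} := by
        simp only [card_filter, Fintype.sum_prod_type, ite_and]
        rw [sum_comm, powersetCard_eq_filter, powerset_univ, sum_filter]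
        simp
    _ = ∑ S ∈ powersetCard k univ, if ∑ i ∈ S, X i = 0 then Fintype.card G else 0 :=
        sum_congr rfl fun S hS => card_plant_eq_of_nonempty X
          (card_pos.1 ((mem_powersetCard_univ.1 hS).symm ▸ hk))
    _ = Fintype.card G * numSol k X := by
        rw [sum_ite, sum_const_zero, add_zero, sum_const, smul_eq_mul, numSol, mul_comm]

theorem D1prob_eq {k : ℕ} (hk : 1 ≤ k) (E : Finset (Fin r → G)) :
    D1prob k E = (Fintype.card G * ∑ X ∈ E, (numSol k X : ℝ)) /
      ((Fintype.card G : ℝ) ^ r * r.choose k) := by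
  simp only [D1prob, D1pmf, card_plant_eq hk, ← sum_div, ← mul_sum, Nat.cast_mul]

theorem sum_numSol_pow_three (k : ℕ) :
    ∑ X : Fin r → G, numSol k X ^ 3 = ∑ S ∈ powersetCard k (univ : Finset (Fin r)),
      ∑ T ∈ powersetCard k univ, ∑ U ∈ powersetCard k univ, zeroSumCount₃ G S T U := by
  have hcube (X : Fin r → G) : numSol k X ^ 3 = ∑ S ∈ powersetCard k univ,
      ∑ T ∈ powersetCard k univ, ∑ U ∈ powersetCard k univ,
        if ∑ i ∈ S, X i = 0 ∧ ∑ i ∈ T, X i = 0 ∧ ∑ i ∈ U, X i = 0 then 1 else 0 := by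
    rw [numSol, card_filter, pow_three, sum_mul_sum, sum_mul]
    simp only [mul_sum, ite_zero_mul_ite_zero, mul_one]
  simp only [hcube, zeroSumCount₃, card_filter]
  rw [sum_comm]
  refine sum_congr rfl fun S _ => ?_
  rw [sum_comm]
  exact sum_congr rfl fun T _ => sum_comm

theorem sum_numSol_pow_three_le {k : ℕ} (hk : 1 ≤ k) (hr : 3 ≤ r)
    (hC : r.choose k ≤ Fintype.card G) :
    ∑ X : Fin r → G, numSol k X ^ 3 ≤ 6 * r.choose k * Fintype.card G ^ (r - 1) := by
  have hpow : ∀ m, m + 1 ≤ r →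
      r.choose k * Fintype.card G ^ (r - (m + 1)) ≤ Fintype.card G ^ (r - m) := fun m hm => by
    rw [show r - m = r - (m + 1) + 1 by omega, pow_succ']
    exact Nat.mul_le_mul_right _ hC
  have h2 := hpow 1 (by omega)
  have h3 := hpow 2 (by omega)
  simp only [Nat.reduceAdd] at h2 h3
  have hrow : ∀ S ∈ powersetCard k (univ : Finset (Fin r)), ∑ T ∈ powersetCard k univ,
      ∑ U ∈ powersetCard k univ, zeroSumCount₃ G S T U ≤ 6 * Fintype.card G ^ (r - 1) := by
    intro S hS
    have hS := mem_powersetCard_univ.1 hS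
    calc _ ≤ ∑ T ∈ powersetCard k (univ : Finset (Fin r)),
          ((if S = T then 2 * Fintype.card G ^ (r - 1) else 0) +
            4 * Fintype.card G ^ (r - 2)) := by
          refine sum_le_sum fun T hT => ?_
          split_ifs with hST
          · subst hST
            have := sum_zeroSumCount₃_self_le (G := G) hk hS
            simp only [Fintype.card_fin] at this
            omega
          · have := sum_zeroSumCount₃_le (G := G) hS (mem_powersetCard_univ.1 hT) hST
            simp only [Fintype.card_fin] at this
            omega
      _ ≤ 2 * Fintype.card G ^ (r - 1) + r.choose k * (4 * Fintype.card G ^ (r - 2)) := by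
          rw [sum_add_distrib, sum_ite_eq, sum_const, card_powersetCard, card_univ,
            Fintype.card_fin, smul_eq_mul]
          gcongr
          simp [hS]
      _ ≤ 6 * Fintype.card G ^ (r - 1) := by
          rw [mul_left_comm]
          omega
  rw [sum_numSol_pow_three]
  calc _ ≤ ∑ S ∈ powersetCard k (univ : Finset (Fin r)), 6 * Fintype.card G ^ (r - 1) :=
        sum_le_sum hrow
    _ = 6 * r.choose k * Fintype.card G ^ (r - 1) := by
      rw [sum_const, card_powersetCard, card_univ, Fintype.card_fin, smul_eq_mul]; ring

theorem mul_choose_sq_le_of_le_D1prob {k : ℕ} (hk : 1 ≤ k) (hr : 3 ≤ r)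
    (hC : r.choose k ≤ Fintype.card G) (hCpos : 0 < r.choose k) {ε : ℝ} (hε : 0 ≤ ε)
    {E : Finset (Fin r → G)} (hE : ε ≤ D1prob k E) :
    ε ^ 3 * (r.choose k : ℝ) ^ 2 ≤ 6 * (Fintype.card G : ℝ) ^ 2 * D0prob G E ^ 2 := by
  have hC0 : 0 < (r.choose k : ℝ) := by exact_mod_cast hCpos
  have hthird : ∑ X : Fin r → G, (numSol k X : ℝ) ^ 3 ≤
      6 * r.choose k * (Fintype.card G : ℝ) ^ (r - 1) := by
    exact_mod_cast sum_numSol_pow_three_le hk hr hC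
  set g : ℝ := (Fintype.card G : ℝ)
  set C : ℝ := (r.choose k : ℝ)
  set α := ∑ X ∈ E, (numSol k X : ℝ)
  set β := ∑ X : Fin r → G, (numSol k X : ℝ) ^ 3
  have hg : 0 < g := by simp [g, Fintype.card_pos]
  have hfirst : ε * g ^ r * C ≤ g * α := by
    rw [D1prob_eq hk, le_div_iff₀ (by positivity)] at hE
    linarith
  have hholder : α ^ 3 ≤ (#E : ℝ) ^ 2 * β :=
    (pow_sum_le_card_mul_sum_pow (fun _ _ => by positivity) 2).trans <| by
      gcongr
      exact sum_le_sum_of_subset_of_nonneg (subset_univ E) fun _ _ _ => by positivity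
  have hgβ : g * β ≤ 6 * C * g ^ r := by
    calc g * β ≤ g * (6 * C * g ^ (r - 1)) := by gcongr
      _ = 6 * C * g ^ (r - 1 + 1) := by ring
      _ = 6 * C * g ^ r := by rw [Nat.sub_add_cancel (by omega)]
  have key :
      (C * g ^ r) * (ε ^ 3 * C ^ 2 * (g ^ r) ^ 2) ≤ (C * g ^ r) * (6 * g ^ 2 * #E ^ 2) :=
    calc (C * g ^ r) * (ε ^ 3 * C ^ 2 * (g ^ r) ^ 2) = (ε * g ^ r * C) ^ 3 := by ring
      _ ≤ (g * α) ^ 3 := by gcongr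
      _ = g ^ 3 * α ^ 3 := by ring
      _ ≤ g ^ 3 * (#E ^ 2 * β) := by gcongr
      _ = g ^ 2 * #E ^ 2 * (g * β) := by ring
      _ ≤ g ^ 2 * #E ^ 2 * (6 * C * g ^ r) := by gcongr
      _ = (C * g ^ r) * (6 * g ^ 2 * #E ^ 2) := by ring
  rw [D0prob, div_pow, mul_div_assoc', le_div_iff₀ (by positivity)]
  exact le_of_mul_le_mul_left key (by positivity)

end

theorem planted_nonplanted_equivalence_general
    (G : Type) [AddCommGroup G] [Fintype G] [DecidableEq G]
    (k r : ℕ) (hk : 3 ≤ k) (hr : 2 ^ k * k ^ 2 ≤ r)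
    (hG1 : r ^ k ≤ Fintype.card G) (hG2 : Fintype.card G ≤ 2 * r ^ k)
    (ε : ℝ) (hε0 : 0 < ε)
    (E : Finset (Fin r → G)) (hE : ε ≤ D1prob k E) :
    ε ^ ((3 : ℝ) / 2) / (21 * (k : ℝ) ^ k) ≤ D0prob G E := by
  have h8 : 8 * k ^ 2 ≤ r :=
    (Nat.mul_le_mul_right _ (Nat.pow_le_pow_right two_pos hk)).trans hr
  have hkr : k ≤ r := by nlinarith
  have hC : r.choose k ≤ Fintype.card G := (Nat.choose_le_pow r k).trans hG1
  have hdens := mul_choose_sq_le_of_le_D1prob (by omega) (by nlinarith) hC (Nat.choose_pos hkr)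
    hε0.le hE
  have hbin : 7 * (Fintype.card G : ℝ) ≤ 16 * k ^ k * r.choose k := by
    have := Nat.seven_mul_pow_le_choose h8
    exact_mod_cast (show 7 * Fintype.card G ≤ 16 * k ^ k * r.choose k by nlinarith)
  have hD0 : 0 ≤ D0prob G E := by unfold D0prob; positivity
  have hε3 : (ε ^ ((3 : ℝ) / 2)) ^ 2 = ε ^ 3 := by
    rw [← Real.rpow_natCast, ← Real.rpow_mul hε0.le]; norm_num
  rw [← pow_le_pow_iff_left₀ (by positivity) hD0 two_ne_zero, div_pow, hε3,
    div_le_iff₀ (by positivity)]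
  have hg : (0 : ℝ) < Fintype.card G := by exact_mod_cast Fintype.card_pos
  have hg2 : 49 * ε ^ 3 * (Fintype.card G : ℝ) ^ 2 ≤
      1536 * ((k : ℝ) ^ k * D0prob G E) ^ 2 * (Fintype.card G : ℝ) ^ 2 :=
    calc 49 * ε ^ 3 * (Fintype.card G : ℝ) ^ 2 = ε ^ 3 * (7 * Fintype.card G) ^ 2 := by ring
      _ ≤ ε ^ 3 * (16 * k ^ k * r.choose k) ^ 2 := by gcongr
      _ = 256 * ((k : ℝ) ^ k) ^ 2 * (ε ^ 3 * (r.choose k) ^ 2) := by ring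
      _ ≤ 256 * ((k : ℝ) ^ k) ^ 2 * (6 * Fintype.card G ^ 2 * D0prob G E ^ 2) := by gcongr
      _ = _ := by ring
  nlinarith [le_of_mul_le_mul_right hg2 (by positivity), sq_nonneg ((k : ℝ) ^ k * D0prob G E)]

/-- **Equivalence of planted and non-planted k-SUM at density 1.**
If `k ≥ 3`, `2k ≤ r`, `r ≥ 2^k·k²`, and `r^k ≤ |G| ≤ 2·r^k`, then for every
`ε ∈ (0,1]` and every event `E ⊆ G^r`: if `D1(E) ≥ ε` then
`D0(E) ≥ ε^{3/2} / (21·k^k)`. -/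
theorem planted_nonplanted_equivalence
    (G : Type) [AddCommGroup G] [Fintype G] [DecidableEq G]
    (k r : ℕ) (hk : 3 ≤ k) (hkr : 2 * k ≤ r) (hr : 2 ^ k * k ^ 2 ≤ r)
    (hG1 : r ^ k ≤ Fintype.card G) (hG2 : Fintype.card G ≤ 2 * r ^ k)
    (ε : ℝ) (hε0 : 0 < ε) (hε1 : ε ≤ 1)
    (E : Finset (Fin r → G)) (hE : ε ≤ D1prob k E) :
    ε ^ ((3 : ℝ) / 2) / (21 * (k : ℝ) ^ k) ≤ D0prob G E :=
  planted_nonplanted_equivalence_general G k r hk hr hG1 hG2 ε hε0 E hE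
end

section
/- Let G be a finite abelian group and 1 ≤ k ≤ r. Then Pr_{X∼D0}[c(X) ≥ 1] ≥ C(r,k)/(|G| − 1 + C(r,k)); equivalently, the probability that a uniformly random instance has no k-SUM solution satisfies Pr_{X∼D0}[c(X) = 0] ≤ (|G|−1)/(|G|−1+C(r,k)) < |G|/(|G|+C(r,k)). -/
/-!
Second moment method. Write `N X` for the number of solutions of `X` and `q = |G|`. For a
nonempty `S` the form `X ↦ ∑ i ∈ S, X i` is onto `G`, so `S` is a solution with probability
`1/q`; two distinct `k`-sets are incomparable, so the pair of their forms is onto `G × G` and both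
are solutions with probability `1/q²`. Hence `E[N] = C(r,k)/q` and
`E[N²] = C(r,k) (q + C(r,k) - 1)/q²`, and Cauchy–Schwarz, `E[N]² ≤ Pr[N ≠ 0] E[N²]`, gives the
bound. The other two claims are algebra.
-/

open Finset

/-- Probability of an event under the uniform distribution `D0` on `G^r`,
where the event is given as a decidable predicate on instances. -/
noncomputable def D0probPred (G : Type) [Fintype G] (r : ℕ)
    (P : (Fin r → G) → Prop) [DecidablePred P] : ℝ :=
  (((univ : Finset (Fin r → G)).filter P).card : ℝ) / (Fintype.card G : ℝ) ^ r

section SecondMoment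

variable {ι α : Type*} [Semiring α] [LinearOrder α] [IsStrictOrderedRing α] [ExistsAddOfLE α]

theorem sq_sum_le_card_filter_ne_zero_mul_sum_sq (s : Finset ι) (f : ι → α) :
    (∑ i ∈ s, f i) ^ 2 ≤ #{i ∈ s | f i ≠ 0} * ∑ i ∈ s, f i ^ 2 := by
  have hsq : ∑ i ∈ s with f i ≠ 0, f i ^ 2 = ∑ i ∈ s, f i ^ 2 :=
    sum_filter_of_ne fun _ _ h hf => h (by rw [hf, zero_pow two_ne_zero])
  rw [← sum_filter_ne_zero, ← hsq]
  exact sq_sum_le_card_mul_sum_sq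

end SecondMoment

theorem AddMonoidHom.card_filter_eq_zero_mul_card {A B : Type*} [AddGroup A] [Fintype A]
    [AddGroup B] [Fintype B] [DecidableEq B] (φ : A →+ B) (hφ : Function.Surjective φ) :
    #{a | φ a = 0} * Fintype.card B = Fintype.card A := by
  have h := φ.ker.card_mul_index
  rw [AddSubgroup.index_ker, φ.range_eq_top.mpr hφ, AddSubgroup.card_top] at h
  simpa [Nat.card_eq_fintype_card, Fintype.card_subtype, AddMonoidHom.mem_ker] using h

section SubsetSum

variable {ι G : Type*} [AddCommGroup G]

def subsetSumHom (S : Finset ι) : (ι → G) →+ G where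
  toFun X := ∑ i ∈ S, X i
  map_zero' := sum_const_zero
  map_add' _ _ := sum_add_distrib

@[simp]
theorem subsetSumHom_apply (S : Finset ι) (X : ι → G) : subsetSumHom S X = ∑ i ∈ S, X i := rfl

variable [DecidableEq ι] {S T : Finset ι}

theorem subsetSumHom_single (S : Finset ι) (i : ι) (a : G) :
    subsetSumHom S (Pi.single i a) = if i ∈ S then a else 0 :=
  sum_pi_single' i a S

theorem subsetSumHom_surjective (hS : S.Nonempty) :
    Function.Surjective (subsetSumHom (G := G) S) := by
  obtain ⟨i, hi⟩ := hS
  exact fun a => ⟨Pi.single i a, by rw [subsetSumHom_single, if_pos hi]⟩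

theorem subsetSumHom_prod_surjective (hST : ¬S ⊆ T) (hTS : ¬T ⊆ S) :
    Function.Surjective ((subsetSumHom (G := G) S).prod (subsetSumHom T)) := by
  obtain ⟨i, hiS, hiT⟩ := not_subset.mp hST
  obtain ⟨j, hjT, hjS⟩ := not_subset.mp hTS
  rintro ⟨a, b⟩
  refine ⟨Pi.single i a + Pi.single j b, ?_⟩
  simp only [AddMonoidHom.prod_apply, map_add, subsetSumHom_single, if_pos hiS, if_neg hiT,
    if_pos hjT, if_neg hjS, Prod.mk_add_mk, add_zero, zero_add]

variable [Fintype ι] [Fintype G] [DecidableEq G]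

theorem card_subsetSumHom_eq_zero_mul (hS : S.Nonempty) :
    #{X : ι → G | subsetSumHom S X = 0} * Fintype.card G = Fintype.card G ^ Fintype.card ι := by
  have h := AddMonoidHom.card_filter_eq_zero_mul_card (A := ι → G) (subsetSumHom S)
    (subsetSumHom_surjective hS)
  rwa [Fintype.card_fun] at h

theorem card_subsetSumHom_eq_zero_and_mul (hST : ¬S ⊆ T) (hTS : ¬T ⊆ S) :
    #{X : ι → G | subsetSumHom S X = 0 ∧ subsetSumHom T X = 0} * Fintype.card G ^ 2
      = Fintype.card G ^ Fintype.card ι := by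
  have h := AddMonoidHom.card_filter_eq_zero_mul_card (A := ι → G)
    ((subsetSumHom S).prod (subsetSumHom T)) (subsetSumHom_prod_surjective hST hTS)
  rwa [Fintype.card_prod, ← sq, Fintype.card_fun,
    filter_congr fun X _ => Prod.mk_eq_zero] at h

end SubsetSum

theorem sum_card_filter_sq {α β : Type*} (s : Finset α) (t : Finset β) (R : β → α → Prop)
    [∀ b a, Decidable (R b a)] :
    ∑ a ∈ s, #{b ∈ t | R b a} ^ 2 = ∑ b ∈ t, ∑ c ∈ t, #{a ∈ s | R b a ∧ R c a} := by
  simp_rw [sq, card_filter, sum_mul_sum, ite_zero_mul_ite_zero, mul_one]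
  rw [sum_comm]
  exact sum_congr rfl fun _ _ => sum_comm

section Moments

variable {ι G : Type*} [Fintype ι] [DecidableEq ι] [AddCommGroup G] [Fintype G] [DecidableEq G]
  {P : Finset (Finset ι)}

def numSolIn (P : Finset (Finset ι)) (X : ι → G) : ℕ := #{S ∈ P | subsetSumHom S X = 0}

theorem sum_numSolIn_mul (hP : ∀ S ∈ P, S.Nonempty) :
    (∑ X : ι → G, numSolIn P X) * Fintype.card G = #P * Fintype.card G ^ Fintype.card ι := by
  have hswap : ∑ X : ι → G, numSolIn P X = ∑ S ∈ P, #{X : ι → G | subsetSumHom S X = 0} :=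
    sum_card_bipartiteAbove_eq_sum_card_bipartiteBelow _
  rw [hswap, sum_mul, sum_congr rfl fun S hS => card_subsetSumHom_eq_zero_mul (hP S hS),
    sum_const, smul_eq_mul]

theorem sum_card_subsetSumHom_eq_zero_and_mul (hP : IsAntichain (· ⊆ ·) (P : Set (Finset ι)))
    {S : Finset ι} (hS : S ∈ P) (hS₀ : S.Nonempty) :
    (∑ T ∈ P, #{X : ι → G | subsetSumHom S X = 0 ∧ subsetSumHom T X = 0}) * Fintype.card G ^ 2
      = (Fintype.card G + (#P - 1)) * Fintype.card G ^ Fintype.card ι := by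
  have hdiag : #{X : ι → G | subsetSumHom S X = 0 ∧ subsetSumHom S X = 0} * Fintype.card G ^ 2
      = Fintype.card G * Fintype.card G ^ Fintype.card ι := by
    simp_rw [and_self, sq, ← mul_assoc, card_subsetSumHom_eq_zero_mul hS₀, mul_comm]
  have hoff : ∀ T ∈ P.erase S,
      #{X : ι → G | subsetSumHom S X = 0 ∧ subsetSumHom T X = 0} * Fintype.card G ^ 2
        = Fintype.card G ^ Fintype.card ι := by
    intro T hT
    obtain ⟨hTS, hT⟩ := mem_erase.mp hT
    exact card_subsetSumHom_eq_zero_and_mul (hP hS hT hTS.symm) (hP hT hS hTS)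
  rw [← add_sum_erase P _ hS, add_mul, sum_mul, hdiag, sum_congr rfl hoff, sum_const,
    smul_eq_mul, card_erase_of_mem hS, add_mul]

theorem sum_numSolIn_sq_mul (hP : IsAntichain (· ⊆ ·) (P : Set (Finset ι)))
    (hne : ∀ S ∈ P, S.Nonempty) :
    (∑ X : ι → G, numSolIn P X ^ 2) * Fintype.card G ^ 2
      = #P * (Fintype.card G + (#P - 1)) * Fintype.card G ^ Fintype.card ι := by
  unfold numSolIn
  rw [sum_card_filter_sq univ P fun S X => subsetSumHom S X = 0, sum_mul,
    sum_congr rfl fun S hS => sum_card_subsetSumHom_eq_zero_and_mul hP hS (hne S hS), sum_const,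
    smul_eq_mul, mul_assoc]

theorem card_mul_pow_le_card_numSolIn_ne_zero_mul
    (hP : IsAntichain (· ⊆ ·) (P : Set (Finset ι))) (hne : ∀ S ∈ P, S.Nonempty) :
    #P * Fintype.card G ^ Fintype.card ι
      ≤ #{X : ι → G | numSolIn P X ≠ 0} * (Fintype.card G + (#P - 1)) := by
  set q := Fintype.card G
  set m := #P * q ^ Fintype.card ι
  have hCS := sq_sum_le_card_filter_ne_zero_mul_sum_sq univ (numSolIn (G := G) P)
  have h : m * m ≤ m * (#{X : ι → G | numSolIn P X ≠ 0} * (q + (#P - 1))) :=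
    calc m * m = ((∑ X : ι → G, numSolIn P X) * q) ^ 2 := by rw [sum_numSolIn_mul hne, sq]
      _ ≤ #{X : ι → G | numSolIn P X ≠ 0} * ((∑ X : ι → G, numSolIn P X ^ 2) * q ^ 2) := by
        rw [mul_pow, ← mul_assoc]
        exact Nat.mul_le_mul_right _ hCS
      _ = m * (#{X : ι → G | numSolIn P X ≠ 0} * (q + (#P - 1))) := by
        rw [sum_numSolIn_sq_mul hP hne]
        ring
  rcases Nat.eq_zero_or_pos m with hm | hm
  · rw [hm]
    exact Nat.zero_le _
  · exact Nat.le_of_mul_le_mul_left h hm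

end Moments

theorem D0probPred_add_D0probPred_not (G : Type) [Fintype G] [Nonempty G] (r : ℕ)
    (P : (Fin r → G) → Prop) [DecidablePred P] :
    D0probPred G r P + D0probPred G r (fun X => ¬P X) = 1 := by
  have hcard : ((Fintype.card G : ℝ) ^ r) ≠ 0 := by positivity
  rw [D0probPred, D0probPred, ← add_div, div_eq_one_iff_eq hcard, ← Nat.cast_add,
    card_filter_add_card_filter_not, card_univ, Fintype.card_fun, Fintype.card_fin]
  push_cast
  rfl

theorem choose_mul_pow_le_card_one_le_numSol (G : Type) [AddCommGroup G] [Fintype G]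
    [DecidableEq G] {k : ℕ} (hk : 1 ≤ k) (r : ℕ) :
    r.choose k * Fintype.card G ^ r
      ≤ #{X : Fin r → G | 1 ≤ numSol k X} * (Fintype.card G + (r.choose k - 1)) := by
  have hne : ∀ S ∈ powersetCard k (univ : Finset (Fin r)), S.Nonempty := fun S hS =>
    card_pos.mp ((mem_powersetCard_univ.mp hS).symm ▸ hk)
  have h := card_mul_pow_le_card_numSolIn_ne_zero_mul (G := G)
    (Set.sized_powersetCard univ k).isAntichain hne
  have hnum : ∀ X : Fin r → G, numSol k X = numSolIn (powersetCard k univ) X := fun _ => rfl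
  simp_rw [Nat.one_le_iff_ne_zero, hnum]
  rwa [card_powersetCard, card_univ, Fintype.card_fin] at h

/-- **Existence of solutions under the uniform distribution.**
`Pr_{X∼D0}[c(X) ≥ 1] ≥ C(r,k)/(|G| − 1 + C(r,k))`; equivalently,
`Pr_{X∼D0}[c(X) = 0] ≤ (|G|−1)/(|G|−1+C(r,k)) < |G|/(|G|+C(r,k))`. -/
theorem uniform_has_solution_prob
    (G : Type) [AddCommGroup G] [Fintype G] [DecidableEq G]
    (k r : ℕ) (hk : 1 ≤ k) (hkr : k ≤ r) :
    ((r.choose k : ℝ) / ((Fintype.card G : ℝ) - 1 + (r.choose k : ℝ))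
        ≤ D0probPred G r (fun X => 1 ≤ numSol k X))
    ∧ (D0probPred G r (fun X => numSol k X = 0)
        ≤ ((Fintype.card G : ℝ) - 1) / ((Fintype.card G : ℝ) - 1 + (r.choose k : ℝ)))
    ∧ (((Fintype.card G : ℝ) - 1) / ((Fintype.card G : ℝ) - 1 + (r.choose k : ℝ))
        < (Fintype.card G : ℝ) / ((Fintype.card G : ℝ) + (r.choose k : ℝ))) := by
  have hC : 1 ≤ r.choose k := Nat.choose_pos hkr
  have hq : (1 : ℝ) ≤ Fintype.card G := by exact_mod_cast Fintype.card_pos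
  have hCR : (1 : ℝ) ≤ r.choose k := by exact_mod_cast hC
  have hqr : (0 : ℝ) < (Fintype.card G : ℝ) ^ r := by positivity
  have hden : (0 : ℝ) < Fintype.card G - 1 + r.choose k := by linarith
  have hsol : (r.choose k : ℝ) / (Fintype.card G - 1 + r.choose k)
      ≤ D0probPred G r (fun X => 1 ≤ numSol k X) := by
    have h := (Nat.cast_le (α := ℝ)).mpr (choose_mul_pow_le_card_one_le_numSol G hk r)
    push_cast [Nat.cast_sub hC] at h
    rw [D0probPred, div_le_div_iff₀ hden hqr]
    linarith
  have hcompl := D0probPred_add_D0probPred_not G r (fun X => 1 ≤ numSol k X)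
  simp_rw [not_le, Nat.lt_one_iff] at hcompl
  refine ⟨hsol, ?_, ?_⟩
  · have hsplit : ((Fintype.card G : ℝ) - 1) / (Fintype.card G - 1 + r.choose k)
        = 1 - r.choose k / (Fintype.card G - 1 + r.choose k) := by
      field_simp
      ring
    linarith
  · rw [div_lt_div_iff₀ hden (by linarith)]
    nlinarith
end

section
/- Let G be a finite abelian group and 1 ≤ k ≤ r. For X drawn from the planted distribution D1 on G^r, the expected number of k-SUM solutions satisfies E[c(X)] = 1 + (C(r,k) − 1)/|G|. -/
open Finset

/-- Expectation of the number of k-SUM solutions under the planted distribution `D1`. -/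
noncomputable def expD1 (G : Type) [AddCommGroup G] [Fintype G] [DecidableEq G]
    (k r : ℕ) : ℝ :=
  ∑ X : Fin r → G, D1pmf k X * (numSol k X : ℝ)

/-! Fix the planted set `S`. A `k`-set `T` is a solution of `plant Y S` for every `Y` when
`T = S`. When `T ≠ S`, pick `j ∈ T \ S`: adding `a` to `Y j` leaves the planted entry
unchanged and shifts `∑_{i∈T} plant Y S i` by `a`, so this sum is equidistributed on `G` and
`T` is a solution for exactly a `1/|G|` fraction of the `Y`. -/

section ZeroFiber

variable {A B : Type*} [AddGroup A] [AddGroup B]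

def equivZeroFiberProd (f : A → B) (φ : B → A) (hf : ∀ x b, f (x + φ b) = f x + b) :
    A ≃ {x // f x = 0} × B where
  toFun x := (⟨x - φ (f x), by simpa using (hf (x - φ (f x)) (f x)).symm⟩, f x)
  invFun p := p.1 + φ p.2
  left_inv x := sub_add_cancel x _
  right_inv := by
    rintro ⟨⟨y, hy⟩, b⟩
    simp only [hf, hy, zero_add, add_sub_cancel_right]

theorem card_filter_eq_zero_mul_card [Fintype A] [Fintype B] [DecidableEq B] (f : A → B)
    (φ : B → A) (hf : ∀ x b, f (x + φ b) = f x + b) :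
    #{x | f x = 0} * Fintype.card B = Fintype.card A := by
  rw [← Fintype.card_subtype, ← Fintype.card_prod,
    Fintype.card_congr (equivZeroFiberProd f φ hf)]

end ZeroFiber

section Plant

variable {G : Type} [AddCommGroup G] {r : ℕ}

theorem plant_apply_min' (Y : Fin r → G) {S : Finset (Fin r)} (hS : S.Nonempty) :
    plant Y S (S.min' hS) = -∑ i ∈ S.erase (S.min' hS), Y i := by
  simp [plant, hS]

theorem plant_apply_of_ne_min' (Y : Fin r → G) {S : Finset (Fin r)} (hS : S.Nonempty) {j : Fin r}
    (hj : j ≠ S.min' hS) : plant Y S j = Y j := by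
  simp [plant, hS, hj]

theorem plant_apply_of_notMem (Y : Fin r → G) {S : Finset (Fin r)} {j : Fin r} (hj : j ∉ S) :
    plant Y S j = Y j := by
  rcases S.eq_empty_or_nonempty with rfl | hS
  · simp [plant]
  · exact plant_apply_of_ne_min' Y hS (ne_of_mem_of_not_mem (S.min'_mem hS) hj).symm

theorem sum_plant_self (Y : Fin r → G) (S : Finset (Fin r)) : ∑ i ∈ S, plant Y S i = 0 := by
  rcases S.eq_empty_or_nonempty with rfl | hS
  · exact sum_empty
  rw [← add_sum_erase _ _ (S.min'_mem hS), plant_apply_min',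
    sum_congr rfl fun i hi => plant_apply_of_ne_min' Y hS (mem_erase.mp hi).1, neg_add_cancel]

theorem plant_add (Y Z : Fin r → G) (S : Finset (Fin r)) :
    plant (Y + Z) S = plant Y S + plant Z S := by
  ext j
  simp only [plant, Pi.add_apply]
  split_ifs <;> simp only [sum_add_distrib, neg_add]

theorem plant_single_of_notMem {S : Finset (Fin r)} {j : Fin r} (hj : j ∉ S) (a : G) :
    plant (Pi.single j a) S = Pi.single j a := by
  ext i
  by_cases hi : i ∈ S
  · have hS : S.Nonempty := ⟨i, hi⟩
    have hij : i ≠ j := ne_of_mem_of_not_mem hi hj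
    by_cases him : i = S.min' hS
    · rw [him, plant_apply_min', sum_pi_single', if_neg (fun h => hj (mem_of_mem_erase h)),
        neg_zero, Pi.single_eq_of_ne (him ▸ hij)]
    · exact plant_apply_of_ne_min' _ hS him
  · exact plant_apply_of_notMem _ hi

theorem sum_plant_add_single {S T : Finset (Fin r)} {j : Fin r} (hjT : j ∈ T) (hjS : j ∉ S)
    (Y : Fin r → G) (a : G) :
    ∑ i ∈ T, plant (Y + Pi.single j a) S i = ∑ i ∈ T, plant Y S i + a := by
  rw [plant_add, plant_single_of_notMem hjS]
  simp [sum_add_distrib, sum_pi_single', hjT]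

end Plant

section Counting

variable {G : Type} [AddCommGroup G] [Fintype G] [DecidableEq G] {r : ℕ}

theorem card_filter_sum_plant_eq_zero_mul_card {S T : Finset (Fin r)} (hTS : ¬T ⊆ S) :
    #{Y : Fin r → G | ∑ i ∈ T, plant Y S i = 0} * Fintype.card G = Fintype.card G ^ r := by
  obtain ⟨j, hjT, hjS⟩ := not_subset.mp hTS
  rw [card_filter_eq_zero_mul_card _ (Pi.single j) (sum_plant_add_single hjT hjS),
    Fintype.card_fun, Fintype.card_fin]

theorem card_filter_sum_plant_eq_zero {k : ℕ} {S T : Finset (Fin r)} (hS : #S = k)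
    (hT : #T = k) :
    (#{Y : Fin r → G | ∑ i ∈ T, plant Y S i = 0} : ℝ) =
      if T = S then (Fintype.card G : ℝ) ^ r
      else (Fintype.card G : ℝ) ^ r / Fintype.card G := by
  split_ifs with hTS
  · subst hTS
    rw [filter_true_of_mem fun Y _ => sum_plant_self Y T, card_univ, Fintype.card_fun,
      Fintype.card_fin, Nat.cast_pow]
  · have hsub : ¬T ⊆ S := fun h => hTS (eq_of_subset_of_card_le h (hS.trans hT.symm).le)
    rw [eq_div_iff (Nat.cast_ne_zero.mpr Fintype.card_ne_zero)]
    exact_mod_cast card_filter_sum_plant_eq_zero_mul_card hsub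

theorem sum_numSol_plant {k : ℕ} {S : Finset (Fin r)} (hS : #S = k) :
    ∑ Y : Fin r → G, (numSol k (plant Y S) : ℝ) =
      (Fintype.card G : ℝ) ^ r +
        ((r.choose k : ℝ) - 1) * (Fintype.card G : ℝ) ^ r / Fintype.card G := by
  set q := (Fintype.card G : ℝ)
  have hcount : ∀ T ∈ univ.powersetCard k,
      (#{Y : Fin r → G | ∑ i ∈ T, plant Y S i = 0} : ℝ) =
      q ^ r / q + if T = S then q ^ r - q ^ r / q else 0 := fun T hT => by
    rw [card_filter_sum_plant_eq_zero hS (mem_powersetCard_univ.mp hT)]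
    split_ifs <;> ring
  simp_rw [numSol, ← sum_boole]
  rw [sum_comm]
  simp_rw [sum_boole]
  rw [sum_congr rfl hcount, sum_add_distrib, sum_const, sum_ite_eq',
    if_pos (mem_powersetCard_univ.mpr hS), card_powersetCard, card_univ, Fintype.card_fin,
    nsmul_eq_mul]
  ring

theorem sum_numSol_plant_card_eq (k : ℕ) :
    ∑ p : (Fin r → G) × Finset (Fin r) with #p.2 = k, (numSol k (plant p.1 p.2) : ℝ) =
      r.choose k * ((Fintype.card G : ℝ) ^ r +
        ((r.choose k : ℝ) - 1) * (Fintype.card G : ℝ) ^ r / Fintype.card G) := by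
  have hprod : ({p : (Fin r → G) × Finset (Fin r) | #p.2 = k} : Finset _) =
      univ ×ˢ univ.powersetCard k := by
    ext p
    simp
  rw [hprod, sum_product_right, sum_congr rfl fun S hS => sum_numSol_plant
    (mem_powersetCard_univ.mp hS), sum_const, card_powersetCard, card_univ, Fintype.card_fin,
    nsmul_eq_mul]

end Counting

theorem expD1_eq_sum_numSol_plant_div (G : Type) [AddCommGroup G] [Fintype G] [DecidableEq G]
    (k r : ℕ) :
    expD1 G k r =
      (∑ p : (Fin r → G) × Finset (Fin r) with #p.2 = k, (numSol k (plant p.1 p.2) : ℝ)) /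
        ((Fintype.card G : ℝ) ^ r * r.choose k) := by
  simp_rw [expD1, D1pmf, div_mul_eq_mul_div, ← sum_div]
  congr 1
  rw [← sum_fiberwise _ fun p : (Fin r → G) × Finset (Fin r) => plant p.1 p.2]
  refine sum_congr rfl fun X _ => ?_
  rw [filter_filter, sum_congr rfl fun p hp => by rw [(mem_filter.mp hp).2.2], sum_const,
    nsmul_eq_mul]

theorem numSol_expectation_planted_general
    (G : Type) [AddCommGroup G] [Fintype G] [DecidableEq G]
    (k r : ℕ) (hkr : k ≤ r) :
    expD1 G k r = 1 + ((r.choose k : ℝ) - 1) / (Fintype.card G : ℝ) := by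
  have hG : (Fintype.card G : ℝ) ≠ 0 := Nat.cast_ne_zero.mpr Fintype.card_ne_zero
  have hC : (r.choose k : ℝ) ≠ 0 := Nat.cast_ne_zero.mpr (Nat.choose_pos hkr).ne'
  rw [expD1_eq_sum_numSol_plant_div, sum_numSol_plant_card_eq]
  field_simp

/-- **Expected number of solutions under the planted distribution.**
For `X ∼ D1`, `E[c(X)] = 1 + (C(r,k) − 1)/|G|`. -/
theorem numSol_expectation_planted
    (G : Type) [AddCommGroup G] [Fintype G] [DecidableEq G]
    (k r : ℕ) (hk : 1 ≤ k) (hkr : k ≤ r) :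
    expD1 G k r = 1 + ((r.choose k : ℝ) - 1) / (Fintype.card G : ℝ) :=
  numSol_expectation_planted_general G k r hkr
end

section
/- Let k ≥ 1 and r ≥ 1 be integers, let M ≥ 1 be an integer, and let X_1, …, X_r be integers with |X_i| < M for every i. Define Y_i := (k+1)·M + X_i for each i, and t := k·(k+1)·M. Then for every subset S ⊆ {1,…,r}: Σ_{i∈S} Y_i = t if and only if |S| = k and Σ_{i∈S} X_i = 0. -/
open Finset

/-!
Every shifted element `Y i = (k + 1) M + X i` lies strictly between `k M` and `(k + 2) M`, so a
subset with sum `k (k + 1) M` has exactly `k` elements. For such a subset the shifts contribute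
exactly `k (k + 1) M`, leaving `∑ X i = 0`.
-/

theorem Finset.card_eq_of_sum_eq_mul_succ {ι : Type*} (S : Finset ι) (f : ι → ℤ) (k : ℕ) {c : ℤ}
    (hc : 0 < c) (hlo : ∀ i ∈ S, k * c < f i) (hhi : ∀ i ∈ S, f i < (k + 2) * c)
    (hsum : ∑ i ∈ S, f i = k * (k + 1) * c) : S.card = k := by
  rcases S.eq_empty_or_nonempty with rfl | hS
  · simp only [sum_empty, zero_eq_mul, mul_eq_zero] at hsum
    rw [card_empty]
    omega
  have hlo' : (S.card : ℤ) * (k * c) < k * (k + 1) * c := by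
    simpa [← hsum] using sum_lt_sum_of_nonempty hS hlo
  have hhi' : k * (k + 1) * c < (S.card : ℤ) * ((k + 2) * c) := by
    simpa [← hsum] using sum_lt_sum_of_nonempty hS hhi
  have hcard_lt : (S.card : ℤ) * k < k * (k + 1) := by nlinarith
  have hcard_gt : (k : ℤ) * (k + 1) < S.card * (k + 2) := by nlinarith
  -- the first bound gives `#S ≤ k`; the second gives `#S ≥ k` because `(k - 1)(k + 2) < k (k + 1)`
  have : (S.card : ℤ) = k := by nlinarith
  exact_mod_cast this

theorem ksum_to_subset_sum_general
    (k r : ℕ) (M : ℤ) (hM : 1 ≤ M)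
    (X : Fin r → ℤ) (hX : ∀ i, |X i| < M) (S : Finset (Fin r)) :
    (∑ i ∈ S, (((k : ℤ) + 1) * M + X i)) = (k : ℤ) * ((k : ℤ) + 1) * M
      ↔ (S.card = k ∧ ∑ i ∈ S, X i = 0) := by
  have hsum : ∑ i ∈ S, (((k : ℤ) + 1) * M + X i) = S.card * ((k + 1) * M) + ∑ i ∈ S, X i := by
    rw [sum_add_distrib, sum_const, nsmul_eq_mul]
  constructor
  · intro h
    have hcard : S.card = k := by
      refine S.card_eq_of_sum_eq_mul_succ _ k (by omega) (fun i _ ↦ ?_) (fun i _ ↦ ?_) h <;>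
      · have := abs_lt.mp (hX i); linarith
    rw [hsum, hcard] at h
    exact ⟨hcard, by linarith⟩
  · rintro ⟨hcard, hX0⟩
    rw [hsum, hcard, hX0]
    ring

/-- **Worst-case reduction from k-SUM to subset sum (core combinatorial claim).**
Let `k, r ≥ 1`, `M ≥ 1`, and let `X₁, …, X_r` be integers with `|X_i| < M`.
With `Y_i := (k+1)·M + X_i` and `t := k·(k+1)·M`, for every subset
`S ⊆ {1,…,r}`: `Σ_{i∈S} Y_i = t` iff `|S| = k` and `Σ_{i∈S} X_i = 0`. -/
theorem ksum_to_subset_sum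
    (k r : ℕ) (M : ℤ) (hk : 1 ≤ k) (hr : 1 ≤ r) (hM : 1 ≤ M)
    (X : Fin r → ℤ) (hX : ∀ i, |X i| < M) (S : Finset (Fin r)) :
    (∑ i ∈ S, (((k : ℤ) + 1) * M + X i)) = (k : ℤ) * ((k : ℤ) + 1) * M
      ↔ (S.card = k ∧ ∑ i ∈ S, X i = 0) :=
  ksum_to_subset_sum_general k r M hM X hX S
end

section
/- Let k, r be integers with k ≥ 3 and r ≥ 10k. Let U be the uniform distribution on all subsets of {1,…,r}, and let D be the distribution on subsets of {1,…,r} obtained by sampling a uniformly random k-element subset T ⊆ {1,…,r} and an independent uniformly random subset S ⊆ {1,…,r}, conditioning on S ∩ T = ∅, and outputting S ∪ T. Then for every event E (a family of subsets of {1,…,r}) with U(E) = γ₀ and exp(−r/8) ≤ γ₀/2, it holds that D(E) ≥ γ₀ · 2^{−(2k+1)}. -/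
open Finset

/-- The pmf of the distribution `D` on subsets of `{1,…,r}` obtained by sampling a
uniformly random `k`-element subset `T` and an independent uniformly random subset
`S`, conditioning on `S ∩ T = ∅`, and outputting `S ∪ T`. (Here pairs `p = (T, S)`
with `|T| = k` and `S ∩ T = ∅` are counted uniformly.) -/
noncomputable def unionDistPmf (k r : ℕ) (Q : Finset (Fin r)) : ℝ :=
  (((univ : Finset (Finset (Fin r) × Finset (Fin r))).filter
      (fun p => p.1.card = k ∧ p.2 ∩ p.1 = ∅ ∧ p.2 ∪ p.1 = Q)).card : ℝ)
    / (((univ : Finset (Finset (Fin r) × Finset (Fin r))).filter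
      (fun p => p.1.card = k ∧ p.2 ∩ p.1 = ∅)).card : ℝ)

/-- Probability of an event `E` (a family of subsets of `{1,…,r}`) under the
distribution `D` above. -/
noncomputable def unionDistProb (k r : ℕ) (E : Finset (Finset (Fin r))) : ℝ :=
  (((univ : Finset (Finset (Fin r) × Finset (Fin r))).filter
      (fun p => p.1.card = k ∧ p.2 ∩ p.1 = ∅ ∧ p.2 ∪ p.1 ∈ E)).card : ℝ)
    / (((univ : Finset (Finset (Fin r) × Finset (Fin r))).filter
      (fun p => p.1.card = k ∧ p.2 ∩ p.1 = ∅)).card : ℝ)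

/-!
A set `Q` arises as `S ∪ T` from exactly `C(|Q|, k)` admissible pairs `(T, S)`, out of
`C(r, k) 2^(r-k)` in total. An exponential-moment (Chernoff) bound shows that at most
`2^r e^(-r/8) ≤ |E|/2` subsets of `{1,…,r}` have fewer than `m = ⌊6r/25⌋` elements, so at
least half of `E` consists of sets of weight `≥ C(m, k)`. Finally `C(r, k) ≤ 8^k C(m, k)`,
because `r - i ≤ 8 (m - i)` for `i < k` when `r ≥ 10k`, and `8^k 2^(r-k) = 2^(r+2k)`.
-/

section
variable {α : Type*} [Fintype α] [DecidableEq α]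

theorem card_disjoint_pairs_union_eq_choose (k : ℕ) (Q : Finset α) :
    #{p : Finset α × Finset α | #p.1 = k ∧ p.2 ∩ p.1 = ∅ ∧ p.2 ∪ p.1 = Q} =
      (#Q).choose k := by
  rw [← card_powersetCard k Q]
  refine card_nbij' Prod.fst (fun T => (T, Q \ T)) ?_ ?_ ?_ ?_
  · rintro ⟨T, S⟩ hp
    simp only [coe_filter, Set.mem_ofPred_eq, mem_univ, true_and] at hp
    obtain ⟨hT, -, rfl⟩ := hp
    simp [mem_powersetCard, hT]
  · intro T hT
    rw [mem_coe, mem_powersetCard] at hT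
    simp [hT.2, sdiff_union_of_subset hT.1]
  · rintro ⟨T, S⟩ hp
    simp only [coe_filter, Set.mem_ofPred_eq, mem_univ, true_and] at hp
    obtain ⟨-, hST, rfl⟩ := hp
    simp [union_sdiff_cancel_right (disjoint_iff_inter_eq_empty.mpr hST)]
  · intro T _
    rfl

theorem card_disjoint_pairs_eq_choose_mul_two_pow (k : ℕ) :
    #{p : Finset α × Finset α | #p.1 = k ∧ p.2 ∩ p.1 = ∅} =
      (Fintype.card α).choose k * 2 ^ (Fintype.card α - k) := by
  rw [card_eq_sum_card_fiberwise (f := Prod.fst) (t := powersetCard k univ)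
    (fun p hp => by simp_all [mem_powersetCard])]
  have hfiber : ∀ T ∈ powersetCard k (univ : Finset α),
      #{p ∈ {p : Finset α × Finset α | #p.1 = k ∧ p.2 ∩ p.1 = ∅} | p.1 = T} =
        2 ^ (Fintype.card α - k) := by
    intro T hT
    rw [mem_powersetCard] at hT
    rw [← hT.2, ← card_compl, ← card_powerset]
    refine card_nbij' Prod.snd (fun S => (T, S)) ?_ ?_ ?_ ?_
    · rintro ⟨T', S⟩ hp
      simp only [coe_filter, mem_filter, mem_univ, true_and, Set.mem_ofPred_eq] at hp
      obtain ⟨⟨-, hST⟩, rfl⟩ := hp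
      rwa [mem_coe, mem_powerset, subset_compl_iff_disjoint_right, disjoint_iff_inter_eq_empty]
    · intro S hS
      rw [mem_coe, mem_powerset, subset_compl_iff_disjoint_right,
        disjoint_iff_inter_eq_empty] at hS
      simp [hT.2, hS]
    · rintro ⟨T', S⟩ hp
      simp only [coe_filter, mem_filter, mem_univ, true_and, Set.mem_ofPred_eq] at hp
      rw [hp.2]
    · intro S _
      rfl
  rw [sum_congr rfl hfiber, sum_const, card_powersetCard, card_univ, smul_eq_mul]

theorem card_disjoint_pairs_union_mem_eq_sum_choose (k : ℕ) (E : Finset (Finset α)) :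
    #{p : Finset α × Finset α | #p.1 = k ∧ p.2 ∩ p.1 = ∅ ∧ p.2 ∪ p.1 ∈ E} =
      ∑ Q ∈ E, (#Q).choose k := by
  rw [card_eq_sum_card_fiberwise (f := fun p => p.2 ∪ p.1) (t := E)
    (fun p hp => by simp_all)]
  refine sum_congr rfl fun Q hQ => ?_
  rw [filter_filter, ← card_disjoint_pairs_union_eq_choose k Q]
  congr 1
  refine filter_congr fun p _ => ?_
  constructor
  · rintro ⟨⟨hT, hST, -⟩, rfl⟩
    exact ⟨hT, hST, rfl⟩
  · rintro ⟨hT, hST, rfl⟩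
    exact ⟨⟨hT, hST, hQ⟩, rfl⟩

end

theorem unionDistProb_eq_sum_choose_div (k r : ℕ) (E : Finset (Finset (Fin r))) :
    unionDistProb k r E = (∑ Q ∈ E, ((#Q).choose k : ℝ)) / (r.choose k * 2 ^ (r - k)) := by
  rw [unionDistProb, card_disjoint_pairs_union_mem_eq_sum_choose,
    card_disjoint_pairs_eq_choose_mul_two_pow, Fintype.card_fin]
  push_cast
  rfl

theorem four_pow_mul_five_pow_le_seven_pow {m n : ℕ} (h : 25 * m ≤ 6 * n) :
    4 ^ m * 5 ^ n ≤ 7 ^ n := by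
  refine (Nat.pow_le_pow_iff_left (n := 25) (by norm_num)).mp ?_
  calc (4 ^ m * 5 ^ n) ^ 25 = 4 ^ (25 * m) * 5 ^ (25 * n) := by ring
    _ ≤ 4 ^ (6 * n) * 5 ^ (25 * n) := by gcongr; norm_num
    _ = (4 ^ 6 * 5 ^ 25) ^ n := by rw [mul_pow, ← pow_mul, ← pow_mul, mul_comm 6, mul_comm 25]
    _ ≤ (7 ^ 25) ^ n := by gcongr; norm_num
    _ = (7 ^ n) ^ 25 := by rw [← pow_mul, ← pow_mul, mul_comm]

section
variable {α : Type*} [Fintype α]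

theorem pow_mul_card_filter_card_lt_le {x : ℝ} (hx₀ : 0 ≤ x) (hx₁ : x ≤ 1) (m : ℕ) :
    x ^ m * #{Q : Finset α | #Q < m} ≤ (1 + x) ^ Fintype.card α := by
  calc x ^ m * #{Q : Finset α | #Q < m}
      = ∑ Q : Finset α with #Q < m, x ^ m := by rw [sum_const, nsmul_eq_mul, mul_comm]
    _ ≤ ∑ Q : Finset α with #Q < m, x ^ #Q :=
        sum_le_sum fun Q hQ => pow_le_pow_of_le_one hx₀ hx₁ (mem_filter.mp hQ).2.le
    _ ≤ ∑ Q : Finset α, x ^ #Q :=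
        sum_le_sum_of_subset_of_nonneg (filter_subset _ _) fun _ _ _ => by positivity
    _ = (1 + x) ^ Fintype.card α := by
        simpa [add_comm] using Fintype.sum_pow_mul_eq_add_pow α x 1

theorem card_filter_card_lt_le_two_pow_mul_exp {m : ℕ}
    (h : 25 * m ≤ 6 * Fintype.card α) :
    (#{Q : Finset α | #Q < m} : ℝ) ≤
      2 ^ Fintype.card α * Real.exp (-(Fintype.card α : ℝ) / 8) := by
  set n := Fintype.card α
  -- `x = 1/4` works because `4^(6/25) · 5/4 < 7/4 < 2 e^(-1/8)`.
  have hcount : (1 / 4 : ℝ) ^ m * #{Q : Finset α | #Q < m} ≤ (5 / 4) ^ n := by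
    convert pow_mul_card_filter_card_lt_le (α := α) (x := 1 / 4) (by norm_num) (by norm_num) m
      using 2
    norm_num
  have hpow : (4 : ℝ) ^ m * 5 ^ n ≤ 7 ^ n := by
    exact_mod_cast four_pow_mul_five_pow_le_seven_pow h
  have hexp : (7 / 8 : ℝ) ≤ Real.exp (-1 / 8) := by linarith [Real.add_one_le_exp (-1 / 8)]
  calc (#{Q : Finset α | #Q < m} : ℝ)
      = 4 ^ m * ((1 / 4) ^ m * #{Q : Finset α | #Q < m}) := by
        rw [← mul_assoc, ← mul_pow]; norm_num
    _ ≤ 4 ^ m * (5 / 4) ^ n := by gcongr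
    _ = 4 ^ m * 5 ^ n / 4 ^ n := by rw [div_pow]; ring
    _ ≤ 7 ^ n / 4 ^ n := by gcongr
    _ = 2 ^ n * (7 / 8) ^ n := by rw [← mul_pow]; norm_num [div_pow]
    _ ≤ 2 ^ n * Real.exp (-1 / 8) ^ n := by gcongr
    _ = 2 ^ n * Real.exp (-(n : ℝ) / 8) := by rw [← Real.exp_nat_mul]; ring_nf

end

theorem card_mul_choose_le_two_mul_sum_choose {α : Type*} {E : Finset (Finset α)} {m : ℕ}
    (h : 2 * #{Q ∈ E | #Q < m} ≤ #E) (k : ℕ) :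
    #E * m.choose k ≤ 2 * ∑ Q ∈ E, (#Q).choose k := by
  have hsplit := card_filter_add_card_filter_not (s := E) (fun Q => #Q < m)
  simp only [not_lt] at hsplit
  calc #E * m.choose k ≤ 2 * (#{Q ∈ E | m ≤ #Q} * m.choose k) := by
        rw [← mul_assoc]; gcongr; omega
    _ = 2 * ∑ Q ∈ E with m ≤ #Q, m.choose k := by rw [sum_const, smul_eq_mul]
    _ ≤ 2 * ∑ Q ∈ E with m ≤ #Q, (#Q).choose k := by
        gcongr with Q hQ
        exact (mem_filter.mp hQ).2
    _ ≤ 2 * ∑ Q ∈ E, (#Q).choose k := by gcongr; exact filter_subset _ _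

theorem Nat.choose_le_pow_mul_choose {n m c k : ℕ} (h : ∀ i < k, n - i ≤ c * (m - i)) :
    n.choose k ≤ c ^ k * m.choose k := by
  have hdesc : n.descFactorial k ≤ c ^ k * m.descFactorial k := by
    rw [Nat.descFactorial_eq_prod_range, Nat.descFactorial_eq_prod_range]
    calc ∏ i ∈ range k, (n - i) ≤ ∏ i ∈ range k, c * (m - i) :=
          prod_le_prod' fun i hi => h i (mem_range.mp hi)
      _ = c ^ k * ∏ i ∈ range k, (m - i) := by rw [← pow_card_mul_prod, card_range]
  refine Nat.le_of_mul_le_mul_left ?_ k.factorial_pos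
  rw [← Nat.descFactorial_eq_factorial_mul_choose, mul_left_comm,
    ← Nat.descFactorial_eq_factorial_mul_choose]
  exact hdesc

theorem two_zpow_mul_eight_pow_mul_two_pow_sub {k r : ℕ} (hkr : k ≤ r) :
    (2 : ℝ) ^ (-(2 * (k : ℤ) + 1)) * 8 ^ k * 2 ^ (r - k) = 2 ^ r / 2 := by
  rw [zpow_neg, show 2 * (k : ℤ) + 1 = ((2 * k + 1 : ℕ) : ℤ) by push_cast; ring,
    zpow_natCast, show (8 : ℝ) ^ k = 2 ^ (3 * k) by rw [pow_mul]; norm_num,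
    ← pow_sub_mul_pow 2 hkr]
  field_simp
  ring

theorem unionDist_transfer_general
    (k r : ℕ) (hr : 10 * k ≤ r)
    (E : Finset (Finset (Fin r))) (γ₀ : ℝ)
    (hγ₀ : γ₀ = (E.card : ℝ) / (2 : ℝ) ^ r)
    (hlarge : Real.exp (-(r : ℝ) / 8) ≤ γ₀ / 2) :
    γ₀ * (2 : ℝ) ^ (-(2 * (k : ℤ) + 1)) ≤ unionDistProb k r E := by
  set m := 6 * r / 25
  have hkr : k ≤ r := by omega
  have hsmall : 2 * #{Q ∈ E | #Q < m} ≤ #E := by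
    rw [← Nat.cast_le (α := ℝ), Nat.cast_mul, Nat.cast_two, ← le_div_iff₀' two_pos]
    calc (#{Q ∈ E | #Q < m} : ℝ) ≤ #{Q : Finset (Fin r) | #Q < m} := by
          exact_mod_cast card_le_card (filter_subset_filter _ (subset_univ E))
      _ ≤ 2 ^ r * Real.exp (-(r : ℝ) / 8) := by
          simpa using card_filter_card_lt_le_two_pow_mul_exp (α := Fin r) (m := m)
            (by rw [Fintype.card_fin]; omega)
      _ ≤ 2 ^ r * (γ₀ / 2) := by gcongr
      _ = #E / 2 := by rw [hγ₀]; field_simp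
  have hsum : (#E * m.choose k : ℝ) ≤ 2 * ∑ Q ∈ E, ((#Q).choose k : ℝ) := by
    exact_mod_cast card_mul_choose_le_two_mul_sum_choose hsmall k
  have hchoose : (r.choose k : ℝ) ≤ 8 ^ k * m.choose k := by
    exact_mod_cast Nat.choose_le_pow_mul_choose fun i hi => by omega
  rw [unionDistProb_eq_sum_choose_div, le_div_iff₀ (by have := Nat.choose_pos hkr; positivity)]
  calc γ₀ * 2 ^ (-(2 * (k : ℤ) + 1)) * (r.choose k * 2 ^ (r - k))
      ≤ γ₀ * 2 ^ (-(2 * (k : ℤ) + 1)) * (8 ^ k * m.choose k * 2 ^ (r - k)) := by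
        rw [hγ₀]; gcongr
    _ = #E / 2 ^ r * (2 ^ (-(2 * (k : ℤ) + 1)) * 8 ^ k * 2 ^ (r - k)) * m.choose k := by
        rw [hγ₀]; ring
    _ = #E * m.choose k / 2 := by rw [two_zpow_mul_eight_pow_mul_two_pow_sub hkr]; field_simp
    _ ≤ ∑ Q ∈ E, ((#Q).choose k : ℝ) := by linarith

/-- **Transfer from the uniform distribution on subsets to the union distribution.**
Let `k ≥ 3` and `r ≥ 10k`. For every event `E` (a family of subsets of `{1,…,r}`)
with uniform probability `γ₀ = |E|/2^r` satisfying `exp(−r/8) ≤ γ₀/2`, we have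
`D(E) ≥ γ₀·2^{−(2k+1)}`. -/
theorem unionDist_transfer
    (k r : ℕ) (hk : 3 ≤ k) (hr : 10 * k ≤ r)
    (E : Finset (Finset (Fin r))) (γ₀ : ℝ)
    (hγ₀ : γ₀ = (E.card : ℝ) / (2 : ℝ) ^ r)
    (hlarge : Real.exp (-(r : ℝ) / 8) ≤ γ₀ / 2) :
    γ₀ * (2 : ℝ) ^ (-(2 * (k : ℤ) + 1)) ≤ unionDistProb k r E :=
  unionDist_transfer_general k r hr E γ₀ hγ₀ hlarge
end

section
/- Let G be a finite abelian group and 1 ≤ k ≤ r. Fix a k-element subset S ⊆ {1,…,r} and a tuple V = (v_i)_{i∈S} of elements of G with Σ_{i∈S} v_i = 0. Sample X ∈ G^r by setting X_i = v_i for i ∈ S and choosing the remaining r − k entries independently and uniformly at random from G. Then the probability that there exists a k-element subset K ⊆ {1,…,r} with K ≠ S and Σ_{i∈K} X_i = 0 is at most (C(r,k) − 1)/|G|. -/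
/-!
For a `k`-set `K ≠ S`, the sum over `K` of the planted instance is a constant (the planted
values on `K ∩ S`) plus the sum of the random entries on the nonempty set `K \ S`. The latter is
a surjective homomorphism `G^r → G`, so all its fibres have size `|G|^(r-1)`, and `K` is a
solution with probability exactly `1/|G|`. A union bound over the `C(r,k) - 1` sets `K ≠ S`
finishes the proof.
-/

open Finset

theorem AddMonoidHom.card_mul_card_fiber_of_surjective {A B : Type*} [AddGroup A] [Fintype A]
    [AddGroup B] [Fintype B] [DecidableEq B] (f : A →+ B) (hf : Function.Surjective f) (b : B) :
    Fintype.card B * #{a | f a = b} = Fintype.card A := by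
  calc Fintype.card B * #{a | f a = b}
      = ∑ c : B, #{a | f a = c} := by
        rw [sum_congr rfl fun c _ ↦ AddMonoidHom.card_fiber_eq_of_mem_range f (hf c) (hf b), sum_const,
          card_univ, smul_eq_mul]
    _ = Fintype.card A := (card_eq_sum_card_fiberwise fun a _ ↦ mem_univ (f a)).symm

theorem Finset.card_mul_card_filter_sum_eq {ι G : Type*} [Fintype ι] [DecidableEq ι]
    [AddCommGroup G] [Fintype G] [DecidableEq G] {T : Finset ι} (hT : T.Nonempty) (c : G) :
    Fintype.card G * #{W : ι → G | ∑ i ∈ T, W i = c} = Fintype.card G ^ Fintype.card ι := by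
  obtain ⟨j, hj⟩ := hT
  let φ : (ι → G) →+ G := AddMonoidHom.mk' (fun W ↦ ∑ i ∈ T, W i) fun _ _ ↦ sum_add_distrib
  have hφ : Function.Surjective φ := fun g ↦ ⟨Pi.single j g, by simp [φ, sum_pi_single', hj]⟩
  exact (φ.card_mul_card_fiber_of_surjective hφ c).trans Fintype.card_fun

theorem Finset.sum_ite_mem_eq_add {ι M : Type*} [DecidableEq ι] [AddCommMonoid M]
    (K S : Finset ι) (v W : ι → M) :
    ∑ i ∈ K, (if i ∈ S then v i else W i) = ∑ i ∈ K ∩ S, v i + ∑ i ∈ K \ S, W i := by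
  rw [sum_ite, filter_mem_eq_inter, ← sdiff_eq_filter]

theorem Finset.sdiff_nonempty_of_card_le_of_ne {α : Type*} [DecidableEq α] {K S : Finset α}
    (hcard : #S ≤ #K) (hne : K ≠ S) : (K \ S).Nonempty :=
  sdiff_nonempty.2 fun hKS ↦ hne (eq_of_subset_of_card_le hKS hcard)

section PlantedInstance

variable {ι G : Type*} [Fintype ι] [DecidableEq ι] [AddCommGroup G] [Fintype G] [DecidableEq G]

theorem card_mul_card_planted_solution {S K : Finset ι} (hcard : #S ≤ #K) (hne : K ≠ S)
    (v : ι → G) :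
    Fintype.card G * #{W : ι → G | ∑ i ∈ K, (if i ∈ S then v i else W i) = 0}
      = Fintype.card G ^ Fintype.card ι := by
  have hfiber : ∀ W : ι → G, ∑ i ∈ K, (if i ∈ S then v i else W i) = 0 ↔
      ∑ i ∈ K \ S, W i = -∑ i ∈ K ∩ S, v i := fun W ↦ by
    rw [sum_ite_mem_eq_add, eq_neg_iff_add_eq_zero, add_comm]
  simp only [hfiber]
  exact card_mul_card_filter_sum_eq (sdiff_nonempty_of_card_le_of_ne hcard hne) _

theorem card_mul_card_extraneous_solutions_le {k : ℕ} {S : Finset ι} (hS : #S = k) (v : ι → G) :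
    Fintype.card G * #{W : ι → G | ∃ K : Finset ι, #K = k ∧ K ≠ S ∧
        ∑ i ∈ K, (if i ∈ S then v i else W i) = 0}
      ≤ #((powersetCard k univ).erase S) * Fintype.card G ^ Fintype.card ι := by
  set solutions := fun K : Finset ι ↦
    ({W : ι → G | ∑ i ∈ K, (if i ∈ S then v i else W i) = 0} : Finset (ι → G))
  have hunion : ({W : ι → G | ∃ K : Finset ι, #K = k ∧ K ≠ S ∧
      ∑ i ∈ K, (if i ∈ S then v i else W i) = 0} : Finset (ι → G))
        ⊆ ((powersetCard k univ).erase S).biUnion solutions := by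
    intro W hW
    obtain ⟨K, hK, hne, hsum⟩ := (mem_filter.1 hW).2
    exact mem_biUnion.2 ⟨K, by simp [hK, hne], by simp [solutions, hsum]⟩
  calc _ ≤ Fintype.card G * ∑ K ∈ (powersetCard k univ).erase S, #(solutions K) := by
        gcongr
        exact (card_le_card hunion).trans card_biUnion_le
    _ = ∑ K ∈ (powersetCard k univ).erase S, Fintype.card G ^ Fintype.card ι := by
        rw [mul_sum]
        refine sum_congr rfl fun K hK ↦ ?_
        obtain ⟨hne, -, hK⟩ := by simpa only [mem_erase, mem_powersetCard] using hK
        exact card_mul_card_planted_solution (hS.trans hK.symm).le hne v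
    _ = _ := by rw [sum_const, smul_eq_mul]

end PlantedInstance

theorem fixed_plant_extraneous_solutions_general
    (G : Type) [AddCommGroup G] [Fintype G] [DecidableEq G]
    (k r : ℕ)
    (S : Finset (Fin r)) (hS : S.card = k)
    (v : Fin r → G) :
    ((((univ : Finset (Fin r → G))).filter
        (fun W => ∃ K : Finset (Fin r), K.card = k ∧ K ≠ S ∧
          (∑ i ∈ K, (if i ∈ S then v i else W i)) = 0)).card : ℝ)
        / (Fintype.card G : ℝ) ^ r
      ≤ ((r.choose k : ℝ) - 1) / (Fintype.card G : ℝ) := by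
  have hG : (0 : ℝ) < Fintype.card G := by exact_mod_cast Fintype.card_pos
  have hcount : (#((powersetCard k univ).erase S) : ℝ) = r.choose k - 1 := by
    rw [cast_card_erase_of_mem (mem_powersetCard.2 ⟨subset_univ S, hS⟩), card_powersetCard,
      card_univ, Fintype.card_fin]
  have hbound := card_mul_card_extraneous_solutions_le hS v
  rw [Fintype.card_fin] at hbound
  rw [div_le_div_iff₀ (by positivity) hG, ← hcount, mul_comm]
  exact_mod_cast hbound

/-- **Extraneous solutions are rare for a fixed planted solution.**
Fix a `k`-element subset `S ⊆ {1,…,r}` and values `v` on `S` summing to `0`.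
Sample `X ∈ G^r` by setting `X_i = v_i` for `i ∈ S` and choosing the remaining
entries independently and uniformly at random. Then the probability that there is
a `k`-element subset `K ≠ S` with `Σ_{i∈K} X_i = 0` is at most `(C(r,k) − 1)/|G|`. -/
theorem fixed_plant_extraneous_solutions
    (G : Type) [AddCommGroup G] [Fintype G] [DecidableEq G]
    (k r : ℕ) (hk : 1 ≤ k) (hkr : k ≤ r)
    (S : Finset (Fin r)) (hS : S.card = k)
    (v : Fin r → G) (hv : ∑ i ∈ S, v i = 0) :
    ((((univ : Finset (Fin r → G))).filter
        (fun W => ∃ K : Finset (Fin r), K.card = k ∧ K ≠ S ∧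
          (∑ i ∈ K, (if i ∈ S then v i else W i)) = 0)).card : ℝ)
        / (Fintype.card G : ℝ) ^ r
      ≤ ((r.choose k : ℝ) - 1) / (Fintype.card G : ℝ) :=
  fixed_plant_extraneous_solutions_general G k r S hS v
end

section
/- Let A be a real symmetric n×n matrix with nonnegative entries whose row sums are all equal to d > 0 (the adjacency matrix of a d-regular multigraph), and let d = λ₁ ≥ λ₂ ≥ … ≥ λₙ be its eigenvalues listed with multiplicity; set λ := max(|λ₂|, |λₙ|). Let γ ∈ (0,1], and let S, T ⊆ {1,…,n} satisfy |T| ≥ (γ/8)·n and Σ_{i∈S} Σ_{j∈T} A_{ij} ≤ (d·γ/16)·|S|. Then |S| ≤ 32·(λ/d)²·n/γ. -/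
/-!
Expand `x = 1_S - (|S|/n)·1` and `y = 1_T` in an orthonormal eigenbasis of `A`. Since `x` is
orthogonal to the eigenvector `1` of eigenvalue `d`, only eigenvalues of modulus at most
`λ = max(|μ₁|, |μ_{n-1}|)` contribute to `⟪x, A y⟫` (when `d > λ`, the eigenvalue `d` is simple),
so `|e(S,T) - d|S||T|/n| ≤ λ √(|S||T|)`. If few edges leave `S` towards the dense set `T`, the
left side is at least `d|S||T|/(2n)`, which forces `|S| ≤ 32 (λ/d)² n/γ`.
-/

open Finset Polynomial Matrix
open scoped InnerProductSpace

theorem Multiset.exists_equiv_of_map_univ_val_eq {α β γ : Type*} [Fintype α] [Fintype β]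
    [DecidableEq γ] {f : α → γ} {g : β → γ} (h : univ.val.map f = univ.val.map g) :
    ∃ e : α ≃ β, ∀ a, g (e a) = f a := by
  classical
  have hcard (c : γ) : Fintype.card {a // f a = c} = Fintype.card {b // g b = c} := by
    have := congrArg (Multiset.count c) h
    simp only [Multiset.count_map, eq_comm (a := c)] at this
    simpa [Fintype.card_subtype, Finset.card_def] using this
  exact ⟨Equiv.ofFiberEquiv fun c => Fintype.equivOfCardEq (hcard c), Equiv.ofFiberEquiv_map _⟩

theorem Matrix.IsHermitian.exists_equiv_eigenvalues_eq {ι : Type*} [Fintype ι] [DecidableEq ι]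
    {A : Matrix ι ι ℝ} (hA : A.IsHermitian) {μ : ι → ℝ} (hμ : A.charpoly = ∏ i, (X - C (μ i))) :
    ∃ e : ι ≃ ι, ∀ i, hA.eigenvalues (e i) = μ i := by
  refine Multiset.exists_equiv_of_map_univ_val_eq ?_
  have := hA.roots_charpoly_eq_eigenvalues
  rw [hμ, roots_prod _ _ (by simp [prod_ne_zero_iff, X_sub_C_ne_zero])] at this
  simpa using this

namespace OrthonormalBasis

variable {𝕜 E ι : Type*} [RCLike 𝕜] [NormedAddCommGroup E] [InnerProductSpace 𝕜 E] [Fintype ι]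
  {b : OrthonormalBasis ι 𝕜 E} {T : E →ₗ[𝕜] E} {ν : ι → ℝ}

theorem inner_apply_eq_mul_inner (hT : ∀ i, T (b i) = (ν i : 𝕜) • b i) (x : E) (i : ι) :
    ⟪b i, T x⟫_𝕜 = ν i * ⟪b i, x⟫_𝕜 := by
  classical
  conv_lhs => rw [← b.sum_repr' x]
  simp [hT, inner_sum, inner_smul_right, b.inner_eq_ite, mul_comm]

theorem norm_apply_le_of_inner_ne_zero (hT : ∀ i, T (b i) = (ν i : 𝕜) • b i) {c : ℝ}
    (hc : 0 ≤ c) {x : E} (hx : ∀ i, ⟪b i, x⟫_𝕜 ≠ 0 → |ν i| ≤ c) : ‖T x‖ ≤ c * ‖x‖ := by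
  have hsq : ‖T x‖ ^ 2 ≤ (c * ‖x‖) ^ 2 := by
    rw [← b.sum_sq_norm_inner_right, mul_pow, ← b.sum_sq_norm_inner_right, mul_sum]
    refine sum_le_sum fun i _ => ?_
    rw [inner_apply_eq_mul_inner hT, norm_mul, mul_pow, RCLike.norm_ofReal]
    by_cases h : ⟪b i, x⟫_𝕜 = 0
    · simp [h]
    · gcongr
      exact hx i h
  exact le_of_sq_le_sq hsq (by positivity)

theorem inner_eq_zero_of_apply_eq_smul (hT : ∀ i, T (b i) = (ν i : 𝕜) • b i) {d : ℝ} {v : E}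
    (hv : T v = (d : 𝕜) • v) (hv0 : v ≠ 0) {k₀ : ι} (hsimple : ∀ k ≠ k₀, ν k ≠ d) {x : E}
    (hx : ⟪v, x⟫_𝕜 = 0) : ⟪b k₀, x⟫_𝕜 = 0 := by
  have hcoord (k) (hk : k ≠ k₀) : ⟪b k, v⟫_𝕜 = 0 := by
    have := inner_apply_eq_mul_inner hT v k
    rw [hv, inner_smul_right] at this
    have hsub : ((d : 𝕜) - ν k) * ⟪b k, v⟫_𝕜 = 0 := by rw [sub_mul, this, sub_self]
    refine (mul_eq_zero.1 hsub).resolve_left ?_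
    exact sub_ne_zero.2 (mod_cast (hsimple k hk).symm)
  have hv' : v = ⟪b k₀, v⟫_𝕜 • b k₀ := by
    conv_lhs => rw [← b.sum_repr' v]
    exact sum_eq_single k₀ (fun k _ hk => by rw [hcoord k hk, zero_smul]) (by simp)
  have hc : ⟪b k₀, v⟫_𝕜 ≠ 0 := fun h => hv0 (by rw [hv', h, zero_smul])
  rw [hv', inner_smul_left] at hx
  exact (mul_eq_zero.1 hx).resolve_left ((_root_.map_ne_zero _).2 hc)

theorem norm_apply_le_of_inner_eq_zero (hT : ∀ i, T (b i) = (ν i : 𝕜) • b i) {d : ℝ} {v : E}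
    (hv : T v = (d : 𝕜) • v) (hv0 : v ≠ 0) {k₀ : ι} (hk₀ : ν k₀ = d) {c : ℝ} (hc : 0 ≤ c)
    (hgap : ∀ k ≠ k₀, |ν k| ≤ c) {x : E} (hx : ⟪v, x⟫_𝕜 = 0) : ‖T x‖ ≤ c * ‖x‖ := by
  refine norm_apply_le_of_inner_ne_zero hT hc fun k hk => ?_
  by_cases hkk₀ : k = k₀
  · subst hkk₀
    -- if `|d| > c`, then `d` is a simple eigenvalue, so `x ⊥ v` forces `⟪b k, x⟫ = 0`
    by_contra hlt
    refine hk (inner_eq_zero_of_apply_eq_smul hT hv hv0 (fun j hj hjd => hlt ?_) hx)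
    rw [hk₀, ← hjd]
    exact hgap j hj
  · exact hgap k hkk₀

end OrthonormalBasis

namespace Matrix.IsHermitian

variable {ι : Type*} [Fintype ι] [DecidableEq ι] {A : Matrix ι ι ℝ} (hA : A.IsHermitian)
  {d c : ℝ} {k₀ : ι}

theorem sq_dotProduct_mulVec_le (hA1 : A *ᵥ 1 = d • 1) (hk₀ : hA.eigenvalues k₀ = d)
    (hc : 0 ≤ c) (hgap : ∀ k ≠ k₀, |hA.eigenvalues k| ≤ c) {x : ι → ℝ} (hx : 1 ⬝ᵥ x = 0)
    (y : ι → ℝ) : (x ⬝ᵥ A *ᵥ y) ^ 2 ≤ c ^ 2 * (x ⬝ᵥ x) * (y ⬝ᵥ y) := by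
  set T := toEuclideanLin A
  have hT (i : ι) : T (hA.eigenvectorBasis i) = (hA.eigenvalues i : ℝ) • hA.eigenvectorBasis i := by
    simp [T, toLpLin_apply, hA.mulVec_eigenvectorBasis]
  have hinner (u w : ι → ℝ) : ⟪WithLp.toLp 2 u, WithLp.toLp 2 w⟫_ℝ = u ⬝ᵥ w := by
    simp [EuclideanSpace.inner_eq_star_dotProduct, dotProduct_comm]
  have hnorm (u : ι → ℝ) : ‖WithLp.toLp 2 u‖ ^ 2 = u ⬝ᵥ u := by
    rw [← real_inner_self_eq_norm_sq, hinner]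
  have hT1 : T (WithLp.toLp 2 1) = (d : ℝ) • WithLp.toLp 2 1 := by
    simp [T, toLpLin_apply, hA1]
  have h10 : WithLp.toLp 2 (1 : ι → ℝ) ≠ 0 := fun h => by
    simpa using congr_arg (fun v => v k₀) h
  have hTx := hA.eigenvectorBasis.norm_apply_le_of_inner_eq_zero hT hT1 h10 hk₀ hc hgap
    (x := WithLp.toLp 2 x) (by rw [hinner, hx])
  have hxAy : x ⬝ᵥ A *ᵥ y = ⟪T (WithLp.toLp 2 x), WithLp.toLp 2 y⟫_ℝ := by
    rw [isSymmetric_toEuclideanLin_iff.2 hA, ← hinner]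
    simp [toLpLin_apply]
  calc (x ⬝ᵥ A *ᵥ y) ^ 2 ≤ (‖T (WithLp.toLp 2 x)‖ * ‖WithLp.toLp 2 y‖) ^ 2 := by
        rw [hxAy, ← sq_abs]
        gcongr
        exact abs_real_inner_le_norm _ _
    _ ≤ (c * ‖WithLp.toLp 2 x‖ * ‖WithLp.toLp 2 y‖) ^ 2 := by gcongr
    _ = c ^ 2 * (x ⬝ᵥ x) * (y ⬝ᵥ y) := by rw [mul_pow, mul_pow, hnorm, hnorm]

theorem expander_mixing (hreg : ∀ i, ∑ j, A i j = d) (hk₀ : hA.eigenvalues k₀ = d)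
    (hc : 0 ≤ c) (hgap : ∀ k ≠ k₀, |hA.eigenvalues k| ≤ c) (S T : Finset ι) :
    (∑ i ∈ S, ∑ j ∈ T, A i j - d * #S * #T / Fintype.card ι) ^ 2 ≤ c ^ 2 * #S * #T := by
  set n : ℝ := (Fintype.card ι : ℝ)
  have : Nonempty ι := ⟨k₀⟩
  have hn : n ≠ 0 := Nat.cast_ne_zero.2 Fintype.card_ne_zero
  set χ : Finset ι → ι → ℝ := fun U i => if i ∈ U then 1 else 0
  have hχ (U : Finset ι) (v : ι → ℝ) : χ U ⬝ᵥ v = ∑ i ∈ U, v i := by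
    simp [χ, dotProduct, sum_ite_mem]
  have hχ' (U : Finset ι) (v : ι → ℝ) : v ⬝ᵥ χ U = ∑ i ∈ U, v i := by
    rw [dotProduct_comm, hχ]
  have hA1 : A *ᵥ 1 = d • 1 := by
    ext i
    simp [mulVec, dotProduct, hreg]
  have h1A : 1 ᵥ* A = d • 1 := by
    rw [← mulVec_transpose, (isHermitian_iff_isSymm.1 hA).eq, hA1]
  have h11 : (1 : ι → ℝ) ⬝ᵥ 1 = n := by simp [n]
  set x := χ S - (#S / n) • 1
  have hx1 : 1 ⬝ᵥ x = 0 := by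
    rw [dotProduct_sub, dotProduct_smul, h11, hχ']
    simp [hn]
  have hxx : x ⬝ᵥ x ≤ #S := by
    have hxχ : x ⬝ᵥ χ S = #S - #S / n * #S := by
      rw [sub_dotProduct, smul_dotProduct, hχ', hχ']
      simp [χ]
    have : 0 ≤ (#S : ℝ) / n * #S := by positivity
    calc x ⬝ᵥ x = x ⬝ᵥ χ S := by
          rw [dotProduct_sub, dotProduct_smul, dotProduct_comm x 1, hx1, smul_zero, sub_zero]
      _ ≤ #S := by linarith
  have hxAχ : x ⬝ᵥ A *ᵥ χ T = ∑ i ∈ S, ∑ j ∈ T, A i j - d * #S * #T / n := by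
    rw [sub_dotProduct, smul_dotProduct, dotProduct_mulVec 1, h1A, smul_dotProduct, hχ, hχ']
    simp [mulVec, hχ']
    ring
  have hχχ : χ T ⬝ᵥ χ T = #T := by simp [hχ, χ]
  calc _ = (x ⬝ᵥ A *ᵥ χ T) ^ 2 := by rw [hxAχ]
    _ ≤ c ^ 2 * (x ⬝ᵥ x) * (χ T ⬝ᵥ χ T) := hA.sq_dotProduct_mulVec_le hA1 hk₀ hc hgap hx1 _
    _ ≤ c ^ 2 * #S * #T := by rw [hχχ]; gcongr

end Matrix.IsHermitian

theorem bad_set_bound_of_mixing {s t e n d γ c : ℝ} (hs : 0 ≤ s) (hn : 0 < n) (hd : 0 < d)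
    (hγ : 0 < γ) (hmix : (e - d * s * t / n) ^ 2 ≤ c ^ 2 * s * t) (hT : γ / 8 * n ≤ t)
    (he : e ≤ d * γ / 16 * s) : s ≤ 32 * (c / d) ^ 2 * n / γ := by
  have ht : 0 < t := lt_of_lt_of_le (by positivity) hT
  have hgap : d * s * t / (2 * n) ≤ d * s * t / n - e := by
    have : d * γ / 16 * s ≤ d * s * t / (2 * n) := by
      rw [le_div_iff₀ (by positivity)]
      nlinarith [mul_le_mul_of_nonneg_left hT (by positivity : 0 ≤ d * s)]
    linarith [show d * s * t / n = 2 * (d * s * t / (2 * n)) by field_simp]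
  have hsq : (d * s * t / (2 * n)) ^ 2 ≤ c ^ 2 * s * t := by
    calc _ ≤ (d * s * t / n - e) ^ 2 := pow_le_pow_left₀ (by positivity) hgap 2
      _ = (e - d * s * t / n) ^ 2 := by ring
      _ ≤ _ := hmix
  rcases hs.eq_or_lt with rfl | hs
  · positivity
  have hdst : d ^ 2 * s * t ≤ 4 * c ^ 2 * n ^ 2 := by
    rw [div_pow, div_le_iff₀ (by positivity)] at hsq
    nlinarith [mul_pos hs ht]
  rw [div_pow, le_div_iff₀ hγ, mul_div_assoc', div_mul_eq_mul_div, le_div_iff₀ (by positivity)]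
  nlinarith [mul_le_mul_of_nonneg_left hT (by positivity : 0 ≤ d ^ 2 * s)]

/-- **Expander-mixing consequence for regular multigraphs.**
Let `A` be a real symmetric `n×n` matrix with nonnegative entries and all row sums
equal to `d > 0`, with eigenvalues (listed with multiplicity, in decreasing order)
`d = μ₀ ≥ μ₁ ≥ … ≥ μ_{n−1}`, and set `λ := max(|μ₁|, |μ_{n−1}|)`. If `γ ∈ (0,1]`
and `S, T ⊆ {1,…,n}` satisfy `|T| ≥ (γ/8)·n` and
`Σ_{i∈S} Σ_{j∈T} A i j ≤ (d·γ/16)·|S|`, then `|S| ≤ 32·(λ/d)²·n/γ`. -/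
theorem expander_mixing_bad_set_bound
    (n : ℕ) (hn : 2 ≤ n) (A : Matrix (Fin n) (Fin n) ℝ)
    (hsymm : A.IsSymm)
    (d : ℝ) (hd : 0 < d) (hreg : ∀ i, ∑ j, A i j = d)
    (μ : Fin n → ℝ) (hmono : Antitone μ)
    (hchar : A.charpoly = ∏ i, (X - C (μ i)))
    (hμ0 : μ ⟨0, by omega⟩ = d)
    (γ : ℝ) (hγ0 : 0 < γ)
    (S T : Finset (Fin n))
    (hT : (γ / 8) * (n : ℝ) ≤ (T.card : ℝ))
    (hST : ∑ i ∈ S, ∑ j ∈ T, A i j ≤ (d * γ / 16) * (S.card : ℝ)) :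
    (S.card : ℝ)
      ≤ 32 * ((max |μ ⟨1, by omega⟩| |μ ⟨n - 1, by omega⟩|) / d) ^ 2 * (n : ℝ) / γ := by
  set c := max |μ ⟨1, by omega⟩| |μ ⟨n - 1, by omega⟩|
  have hA : A.IsHermitian := isHermitian_iff_isSymm.2 hsymm
  obtain ⟨e, he⟩ := hA.exists_equiv_eigenvalues_eq hchar
  have hgap : ∀ k ≠ e ⟨0, by omega⟩, |hA.eigenvalues k| ≤ c := by
    intro k hk
    obtain ⟨i, rfl⟩ := e.surjective k
    have hi : (⟨1, by omega⟩ : Fin n) ≤ i :=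
      Nat.one_le_iff_ne_zero.2 fun h => hk (congrArg e (Fin.ext h))
    rw [he]
    exact (abs_le_max_abs_abs (hmono (Nat.le_sub_one_of_lt i.isLt)) (hmono hi)).trans_eq
      (max_comm _ _)
  have hmix := hA.expander_mixing hreg (k₀ := e ⟨0, by omega⟩) (by rw [he, hμ0])
    ((abs_nonneg _).trans (le_max_left _ _)) hgap S T
  rw [Fintype.card_fin] at hmix
  exact bad_set_bound_of_mixing (Nat.cast_nonneg _) (by positivity) hd hγ0 hmix hT hST
end
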